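/- arXiv:2309.00757 — 5 statements merged into one kernel-verified Lean document; each statement's English description precedes it below -/
import Mathlib

section
/- Let F be a family of graphs on vertex set [n] (n ≥ 1) such that for all G, H in F the intersection G ∩ H (as edge sets, viewed as a spanning subgraph on [n]) is connected. Then |F| ≤ 2^(C(n,2) - (n-1)), i.e., F contains at most a 1/2^(n-1) fraction of all graphs on [n]. -/
/-!
Seidel switching `G ↦ G.switch S` (complementing the edges between `S` and `Sᶜ`) with respect to
the neighbourhood of a fixed vertex `v` isolates `v`, so each switching class contains exactly one
graph in which `v` is isolated, and there are `2 ^ C(n-1, 2)` of those. If `G` and `H` are switching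
equivalent, then `G` and `H` disagree exactly on the edges of a cut, which `G ⊓ H` does not use; so
if `G ⊓ H` is connected the cut is trivial and `G = H`. A connected-intersecting family therefore
meets every switching class at most once.
-/

namespace SimpleGraph

variable {V : Type*}

theorem Preconnected.iff_of_forall_adj {G : SimpleGraph V} (hG : G.Preconnected) {p : V → Prop}
    (hp : ∀ u w, G.Adj u w → (p u ↔ p w)) (u w : V) : p u ↔ p w := by
  obtain ⟨walk⟩ := hG u w
  induction walk with
  | nil => rfl
  | cons hadj _ ih => exact (hp _ _ hadj).trans ih

-- The Seidel switch: `u ~ w` stays unchanged inside `S` and `Sᶜ` and is toggled across the cut.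
def switch (G : SimpleGraph V) (S : Set V) : SimpleGraph V where
  Adj u w := G.Adj u w ↔ (u ∈ S ↔ w ∈ S)
  symm.symm u w h := by rwa [G.adj_comm, Iff.comm (a := w ∈ S)]
  loopless.irrefl u h := by simp at h

@[simp]
theorem switch_adj {G : SimpleGraph V} {S : Set V} {u w : V} :
    (G.switch S).Adj u w ↔ (G.Adj u w ↔ (u ∈ S ↔ w ∈ S)) := Iff.rfl

theorem not_switch_neighborSet_adj (G : SimpleGraph V) (v w : V) :
    ¬(G.switch (G.neighborSet v)).Adj v w := by
  simp

theorem eq_of_switch_eq {G H : SimpleGraph V} {S T : Set V} (hGH : (G ⊓ H).Preconnected)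
    (h : G.switch S = H.switch T) : G = H := by
  have hST : ∀ u w, (G.Adj u w ↔ (u ∈ S ↔ w ∈ S)) ↔ (H.Adj u w ↔ (u ∈ T ↔ w ∈ T)) :=
    fun u w => by rw [← switch_adj, ← switch_adj, h]
  have hconst := hGH.iff_of_forall_adj (p := fun u => u ∈ S ↔ u ∈ T) fun u w ⟨hG, hH⟩ => by
    have := hST u w
    tauto
  ext u w
  have := hST u w
  have := hconst u w
  tauto

theorem eq_of_induce_compl_singleton_eq {G H : SimpleGraph V} {v : V} (hG : ∀ w, ¬G.Adj v w)
    (hH : ∀ w, ¬H.Adj v w) (h : G.induce {v}ᶜ = H.induce {v}ᶜ) : G = H := by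
  ext u w
  by_cases hu : u = v
  · subst hu; simp [hG, hH]
  by_cases hw : w = v
  · subst hw; simp [G.adj_comm u, H.adj_comm u, hG, hH]
  exact congrArg (fun K : SimpleGraph _ => K.Adj ⟨u, hu⟩ ⟨w, hw⟩) h |>.to_iff

theorem natCard_le_two_pow_choose_two [Fintype V] :
    Nat.card (SimpleGraph V) ≤ 2 ^ (Fintype.card V).choose 2 := by
  classical
  have hinj : Function.Injective
      fun (G : SimpleGraph V) (e : {e : Sym2 V // ¬e.IsDiag}) => e.1 ∈ G.edgeSet := by
    intro G H h
    rw [← edgeSet_inj]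
    ext e
    by_cases he : e.IsDiag
    · simp [G.not_mem_edgeSet_of_isDiag he, H.not_mem_edgeSet_of_isDiag he]
    · exact (congrFun h ⟨e, he⟩).to_iff
  calc Nat.card (SimpleGraph V) ≤ Nat.card ({e : Sym2 V // ¬e.IsDiag} → Prop) :=
        Nat.card_le_card_of_injective _ hinj
    _ = 2 ^ (Fintype.card V).choose 2 := by
        rw [Nat.card_eq_fintype_card, Fintype.card_fun, Fintype.card_prop,
          Sym2.card_subtype_not_diag]

theorem ncard_le_of_forall_inf_preconnected [Fintype V] [Nonempty V] {F : Set (SimpleGraph V)}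
    (hF : ∀ G ∈ F, ∀ H ∈ F, (G ⊓ H).Preconnected) :
    F.ncard ≤ 2 ^ (Fintype.card V - 1).choose 2 := by
  classical
  obtain ⟨v⟩ := ‹Nonempty V›
  let normalize (G : SimpleGraph V) : SimpleGraph ({v}ᶜ : Set V) :=
    (G.switch (G.neighborSet v)).induce {v}ᶜ
  have hinj : Set.InjOn normalize F := fun G hG H hH h =>
    eq_of_switch_eq (hF G hG H hH) <| eq_of_induce_compl_singleton_eq
      (not_switch_neighborSet_adj G v) (not_switch_neighborSet_adj H v) h
  calc F.ncard ≤ Nat.card (SimpleGraph ({v}ᶜ : Set V)) := by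
        rw [← Set.ncard_univ]
        exact Set.ncard_le_ncard_of_injOn normalize (fun _ _ => Set.mem_univ _) hinj
    _ ≤ 2 ^ (Fintype.card V - 1).choose 2 := by
        rw [← Set.card_singleton v, ← Fintype.card_compl_set]
        exact natCard_le_two_pow_choose_two

end SimpleGraph

/-- A connected-intersecting family of graphs on `[n]` has size at most
`2 ^ (C(n,2) - (n-1))`. -/
theorem stmt_3 (n : ℕ) (hn : 1 ≤ n) (F : Set (SimpleGraph (Fin n)))
    (h : ∀ G ∈ F, ∀ H ∈ F, (G ⊓ H).Connected) :
    F.ncard ≤ 2 ^ (n.choose 2 - (n - 1)) := by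
  obtain ⟨m, rfl⟩ : ∃ m, n = m + 1 := ⟨n - 1, by omega⟩
  have hchoose : (m + 1).choose 2 - (m + 1 - 1) = m.choose 2 := by
    simp [Nat.choose_succ_succ']
  rw [hchoose]
  simpa using SimpleGraph.ncard_le_of_forall_inf_preconnected
    fun G hG H hH => (h G hG H hH).preconnected
end

section
/- Let n ≥ 3 and let F ⊆ {0,1,2}^(n-1) be a family of words over a 3-letter alphabet such that any two words in F agree in at least 2 coordinates. Then |F| ≤ 3^(n-3). -/
open Finset Complex

noncomputable def om : ℂ := Complex.exp (2 * Real.pi * Complex.I / 3)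

lemma om_prim : IsPrimitiveRoot om 3 := Complex.isPrimitiveRoot_exp 3 (by norm_num)

lemma om_pow3 : om ^ 3 = 1 := om_prim.pow_eq_one

lemma om_sum : 1 + om + om ^ 2 = 0 := by
  have := om_prim.geom_sum_eq_zero (by norm_num)
  simpa [Finset.sum_range_succ] using this

lemma om_mul_conj : om * (starRingEnd ℂ) om = 1 := by
  have h1 : Complex.normSq om ^ 3 = 1 := by
    rw [← map_pow, om_pow3, map_one]
  have h2 : Complex.normSq om = 1 := by
    nlinarith [Complex.normSq_nonneg om, sq_nonneg (Complex.normSq om), sq_nonneg (Complex.normSq om - 1), sq_nonneg (Complex.normSq om + 1)]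
  rw [Complex.mul_conj, h2, Complex.ofReal_one]

lemma om_ne_zero : om ≠ 0 := by
  intro h
  have := om_pow3
  rw [h] at this
  norm_num at this

/-- character of Fin 3 -/
noncomputable def ch (c : Fin 3) : ℂ := om ^ (c : ℕ)

lemma om_pow_mod (x : ℕ) : om ^ (x % 3) = om ^ x := by
  conv_rhs => rw [← Nat.div_add_mod x 3, pow_add, pow_mul, om_pow3, one_pow, one_mul]

lemma ch_zero : ch 0 = 1 := by simp [ch]

lemma ch_add (a b : Fin 3) : ch (a + b) = ch a * ch b := by
  rw [ch, ch, ch, Fin.val_add, om_pow_mod, pow_add]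

lemma ch_ne_zero (a : Fin 3) : ch a ≠ 0 := pow_ne_zero _ om_ne_zero

lemma ch_conj (a : Fin 3) : (starRingEnd ℂ) (ch a) = ch (-a) := by
  have h1 : ch a * (starRingEnd ℂ) (ch a) = 1 := by
    rw [ch, map_pow, ← mul_pow, om_mul_conj, one_pow]
  have h2 : ch a * ch (-a) = 1 := by rw [← ch_add, add_neg_cancel, ch_zero]
  exact mul_left_cancel₀ (ch_ne_zero a) (by rw [h1, h2])

lemma ch_sum {ι : Type*} (s : Finset ι) (f : ι → Fin 3) :
    ch (∑ i ∈ s, f i) = ∏ i ∈ s, ch (f i) := by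
  classical
  induction s using Finset.cons_induction with
  | empty => simp [ch_zero]
  | cons i s hi ih => rw [Finset.sum_cons, Finset.prod_cons, ch_add, ih]



lemma ch_one : ch 1 = om := by simp [ch]
lemma ch_two : ch 2 = om ^ 2 := by simp [ch]
lemma ch_four : ch 4 = om := by
  have e4 : ((4 : Fin 3)) = 1 := by decide
  rw [e4, ch_one]
lemma ch_22 : ch (2 * 2) = om := by
  rw [show ((2:Fin 3) * 2) = 1 from by decide, ch_one]

lemma fin3_cases (w : Fin 3) : w = 0 ∨ w = 1 ∨ w = 2 := by
  have : ∀ v : Fin 3, v = 0 ∨ v = 1 ∨ v = 2 := by decide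
  exact this w

section facts
lemma f3_1 : ((1:Fin 3) = 0) = False := by decide
lemma f3_2 : ((2:Fin 3) = 0) = False := by decide
end facts

lemma orth3 (w : Fin 3) : ∑ c : Fin 3, ch (c * w) = if w = 0 then 3 else 0 := by
  rw [Fin.sum_univ_three]
  rcases fin3_cases w with h | h | h <;> subst h
  · norm_num [ch_zero]
  · norm_num [ch_zero, ch_one, ch_two, ch_four, f3_1, f3_2]
    linear_combination om_sum
  · norm_num [ch_zero, ch_one, ch_two, ch_four, ch_22, f3_1, f3_2]
    linear_combination om_sum

def nz (c : Fin 3) : ℤ := if c = 0 then 0 else 1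

noncomputable def sC (w : Fin 3) : ℂ := ∑ c : Fin 3, (nz c : ℂ) * ch (c * w)

lemma sC_eq (w : Fin 3) : sC w = if w = 0 then 2 else -1 := by
  rw [sC, Fin.sum_univ_three]
  rcases fin3_cases w with h | h | h <;> subst h
  · norm_num [nz, ch_zero, f3_1, f3_2]
  · norm_num [nz, ch_zero, ch_one, ch_two, ch_four, f3_1, f3_2]
    linear_combination om_sum
  · norm_num [nz, ch_zero, ch_one, ch_two, ch_four, ch_22, f3_1, f3_2]
    linear_combination om_sum

lemma sC_comp (w : Fin 3) : ∑ c : Fin 3, ((1 - nz c : ℤ) : ℂ) * ch (c * w) = 1 := by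
  have h : ∑ c : Fin 3, ((1 - nz c : ℤ) : ℂ) * ch (c * w)
      = (∑ c : Fin 3, ch (c * w)) - sC w := by
    rw [sC, ← Finset.sum_sub_distrib]
    congr 1; funext c; push_cast; ring
  rw [h, orth3, sC_eq]
  by_cases hw : w = 0 <;> simp [hw] <;> norm_num


variable {m : ℕ}

/-- inner product -/
def ip (z y : Fin m → Fin 3) : Fin 3 := ∑ i, z i * y i

lemma ch_ip (z y : Fin m → Fin 3) : ch (ip z y) = ∏ i, ch (z i * y i) := by
  rw [ip, ch_sum]

lemma orthG (w : Fin m → Fin 3) :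
    ∑ y : Fin m → Fin 3, ch (ip w y) = if w = 0 then (3 : ℂ) ^ m else 0 := by
  classical
  have h1 : ∑ y : Fin m → Fin 3, ch (ip w y)
      = ∏ i, ∑ c : Fin 3, ch (w i * c) := by
    rw [Fintype.prod_sum fun i c => ch (w i * c)]
    exact Finset.sum_congr rfl fun y _ => by rw [ch_ip]
  rw [h1]
  by_cases hw : w = 0
  · subst hw
    have h2 : ∀ i : Fin m, ∑ c : Fin 3, ch ((0 : Fin m → Fin 3) i * c) = 3 := by
      intro i
      have : ∀ c : Fin 3, ((0 : Fin m → Fin 3) i * c) = 0 := fun c => by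
        show (0 : Fin 3) * c = 0; rw [zero_mul]
      rw [Finset.sum_congr rfl fun c _ => by rw [this c]]
      rw [ch_zero]
      simp
    rw [Finset.prod_congr rfl fun i _ => h2 i, if_pos rfl]
    simp
  · obtain ⟨i0, hi0⟩ : ∃ i, w i ≠ 0 := by
      by_contra hc
      push_neg at hc
      exact hw (funext hc)
    rw [if_neg hw]
    apply Finset.prod_eq_zero (Finset.mem_univ i0)
    rw [show ∑ c : Fin 3, ch (w i0 * c) = ∑ c : Fin 3, ch (c * w i0) from
      Finset.sum_congr rfl fun c _ => by rw [mul_comm], orth3, if_neg hi0]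

def fZ (z : Fin m → Fin 3) : ℤ := ∏ i, nz (z i)

noncomputable def eZ (z : Fin m → Fin 3) : ℤ :=
  ∑ i, (1 - nz (z i)) * ∏ j ∈ Finset.univ.erase i, nz (z j)

lemma TFf (y : Fin m → Fin 3) :
    ∑ z : Fin m → Fin 3, (fZ z : ℂ) * ch (ip z y) = ∏ i, sC (y i) := by
  classical
  have h1 : ∀ z : Fin m → Fin 3, (fZ z : ℂ) * ch (ip z y)
      = ∏ i, ((nz (z i) : ℂ) * ch (z i * y i)) := by
    intro z
    rw [Finset.prod_mul_distrib, fZ, ch_ip]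
    push_cast
    ring
  have h2 := Fintype.prod_sum (fun (i : Fin m) (c : Fin 3) => ((nz c : ℂ) * ch (c * y i)))
  rw [Finset.sum_congr rfl fun z _ => h1 z, ← h2]
  exact Finset.prod_congr rfl fun i _ => rfl

lemma TFe (y : Fin m → Fin 3) :
    ∑ z : Fin m → Fin 3, (eZ z : ℂ) * ch (ip z y)
      = ∑ i, ∏ j ∈ Finset.univ.erase i, sC (y j) := by
  classical
  have h1 : ∀ z : Fin m → Fin 3, (eZ z : ℂ) * ch (ip z y)
      = ∑ i, ∏ j, ((if j = i then ((1 - nz (z j) : ℤ) : ℂ) else (nz (z j) : ℂ)) * ch (z j * y j)) := by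
    intro z
    rw [eZ, ch_ip]
    push_cast [Finset.sum_mul]
    refine Finset.sum_congr rfl fun i _ => ?_
    rw [Finset.prod_mul_distrib]
    congr 1
    rw [← Finset.mul_prod_erase _ _ (Finset.mem_univ i), if_pos rfl]
    congr 1
    exact Finset.prod_congr rfl fun j hj => by
      rw [if_neg (Finset.mem_erase.1 hj).1]
  rw [Finset.sum_congr rfl fun z _ => h1 z, Finset.sum_comm]
  refine Finset.sum_congr rfl fun i _ => ?_
  have h2 := Fintype.prod_sum (fun (j : Fin m) (c : Fin 3) =>
    ((if j = i then ((1 - nz c : ℤ) : ℂ) else (nz c : ℂ)) * ch (c * y j)))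
  rw [← h2]
  rw [← Finset.mul_prod_erase _ _ (Finset.mem_univ i)]
  have hc : ∑ c : Fin 3, ((if i = i then ((1 - nz c : ℤ) : ℂ) else (nz c : ℂ)) * ch (c * y i)) = 1 := by
    simpa using sC_comp (y i)
  rw [hc, one_mul]
  exact Finset.prod_congr rfl fun j hj => by
    simp only [if_neg (Finset.mem_erase.1 hj).1]
    rfl


lemma prodS (y : Fin m → Fin 3) (s : Finset (Fin m)) :
    ∏ j ∈ s, sC (y j)
      = (((-1 : ℤ)) ^ ((s.filter (fun j => ¬ y j = 0)).card)
          * 2 ^ ((s.filter (fun j => y j = 0)).card) : ℤ) := by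
  classical
  rw [← Finset.prod_filter_mul_prod_filter_not s (fun j => y j = 0)]
  have h1 : ∏ j ∈ s.filter (fun j => y j = 0), sC (y j)
      = 2 ^ ((s.filter (fun j => y j = 0)).card) := by
    rw [Finset.prod_congr rfl fun j hj => by
      rw [sC_eq, if_pos (Finset.mem_filter.1 hj).2]]
    rw [Finset.prod_const]
  have h2 : ∏ j ∈ s.filter (fun j => ¬ y j = 0), sC (y j)
      = (-1 : ℂ) ^ ((s.filter (fun j => ¬ y j = 0)).card) := by
    rw [Finset.prod_congr rfl fun j hj => by
      rw [sC_eq, if_neg (Finset.mem_filter.1 hj).2]]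
    rw [Finset.prod_const]
  rw [h1, h2]
  push_cast
  ring

-- integer lemmas
lemma ineq48 : ∀ b : ℕ, 4 ≤ b → (3 * b - 4 : ℤ) ≤ 2 ^ (b - 1) := by
  intro b hb
  induction b, hb using Nat.le_induction with
  | base => norm_num
  | succ n hn ih =>
    have h1 : (2:ℤ) ^ (n - 1) ≥ 8 := by
      calc (2:ℤ)^(n-1) ≥ 2^3 := by
            apply pow_le_pow_right₀ (by norm_num)
            omega
        _ = 8 := by norm_num
    have h2 : (n + 1 : ℕ) - 1 = (n - 1) + 1 := by omega
    rw [h2, pow_succ]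
    push_cast
    nlinarith
lemma lamCoef (b : ℕ) (hb : 1 ≤ b) : ((-1 : ℤ)) ^ b * (4 - 3 * b) ≥ -2 ^ (b - 1) := by
  rcases Nat.even_or_odd b with he | ho
  · rw [he.neg_one_pow, one_mul]
    rcases Nat.lt_or_ge b 4 with h4 | h4
    · interval_cases b
      all_goals first
        | (exact absurd he (by decide))
        | norm_num
    · have := ineq48 b h4
      push_cast
      linarith
  · rw [ho.neg_one_pow]
    have h1 : (1:ℤ) ≤ 2 ^ (b - 1) := one_le_pow₀ (by norm_num)
    push_cast
    nlinarith

lemma lamLB (a b : ℕ) (hb : 1 ≤ b) :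
    ((-1 : ℤ)) ^ b * (4 - 3 * b) * 2 ^ a ≥ -2 ^ (a + b - 1) := by
  have h1 : (2:ℤ) ^ (a + b - 1) = 2 ^ (b-1) * 2 ^ a := by
    rw [← pow_add]
    congr 1
    omega
  rw [h1]
  have h2 := lamCoef b hb
  have h3 : (0:ℤ) ≤ 2 ^ a := by positivity
  nlinarith

lemma lamEq (a b m' : ℕ) (hm : a + b = m') (hb : 1 ≤ b) :
    2 * ((a : ℤ) * ((-1)^b * 2^(a-1)) + (b : ℤ) * ((-1)^(b-1) * 2^a)) + (4 - (m' : ℤ)) * ((-1)^b * 2^a)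
      = (-1 : ℤ)^b * (4 - 3*(b:ℤ)) * 2^a := by
  subst hm
  obtain ⟨b', rfl⟩ : ∃ b', b = b' + 1 := ⟨b - 1, by omega⟩
  rcases a with _ | a'
  · push_cast [pow_succ]
    ring
  · have h1 : (a' + 1 : ℕ) - 1 = a' := rfl
    have h2 : (a' + 1 + (b' + 1) : ℕ) = a' + b' + 2 := by ring
    rw [h1, h2]
    push_cast [pow_succ]
    ring


def zc (y : Fin m → Fin 3) : ℕ := (Finset.univ.filter (fun i => y i = 0)).card
def nzc (y : Fin m → Fin 3) : ℕ := (Finset.univ.filter (fun i => ¬ y i = 0)).card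

lemma zc_add_nzc (y : Fin m → Fin 3) : zc y + nzc y = m := by
  classical
  rw [zc, nzc, Finset.card_filter_add_card_filter_not]
  simp

lemma sumProdErase (y : Fin m → Fin 3) :
    ∑ i, ∏ j ∈ Finset.univ.erase i, sC (y j)
      = (((zc y : ℤ) * ((-1)^(nzc y) * 2^(zc y - 1))
          + (nzc y : ℤ) * ((-1)^(nzc y - 1) * 2^(zc y)) : ℤ) : ℂ) := by
  classical
  set A := Finset.univ.filter (fun i : Fin m => y i = 0) with hA
  set B := Finset.univ.filter (fun i : Fin m => ¬ y i = 0) with hB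
  have hzc : zc y = A.card := rfl
  have hnzc : nzc y = B.card := rfl
  rw [← Finset.sum_filter_add_sum_filter_not Finset.univ (fun i => y i = 0)]
  have hAt : ∀ i ∈ A, ∏ j ∈ Finset.univ.erase i, sC (y j)
      = (((-1 : ℤ))^(B.card) * 2^(A.card - 1) : ℤ) := by
    intro i hi
    rw [prodS y]
    congr 2
    · rw [Finset.filter_erase, ← hB, Finset.erase_eq_of_notMem]
      rw [hB, Finset.mem_filter]
      rw [hA, Finset.mem_filter] at hi
      tauto
    · rw [Finset.filter_erase, ← hA, Finset.card_erase_of_mem hi]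
  have hBt : ∀ i ∈ B, ∏ j ∈ Finset.univ.erase i, sC (y j)
      = (((-1 : ℤ))^(B.card - 1) * 2^(A.card) : ℤ) := by
    intro i hi
    rw [prodS y]
    congr 2
    · rw [Finset.filter_erase, ← hB, Finset.card_erase_of_mem hi]
    · rw [Finset.filter_erase, ← hA, Finset.erase_eq_of_notMem]
      rw [hA, Finset.mem_filter]
      rw [hB, Finset.mem_filter] at hi
      tauto
  rw [Finset.sum_congr rfl hAt, Finset.sum_congr rfl hBt, Finset.sum_const, Finset.sum_const]
  rw [nsmul_eq_mul, nsmul_eq_mul, hzc, hnzc]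
  push_cast
  ring


lemma ip_add (z u y : Fin m → Fin 3) : ip (z + u) y = ip z y + ip u y := by
  rw [ip, ip, ip, ← Finset.sum_add_distrib]
  exact Finset.sum_congr rfl fun i _ => by
    show (z i + u i) * y i = _
    open Fin.CommRing in ring

lemma ip_neg (v y : Fin m → Fin 3) : ip (-v) y = - ip v y := by
  rw [ip, ip, ← Finset.sum_neg_distrib]
  exact Finset.sum_congr rfl fun i _ => by
    show (-(v i)) * y i = _
    open Fin.CommRing in ring

lemma ip_zero_right (u : Fin m → Fin 3) : ip u 0 = 0 := by
  rw [ip]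
  apply Finset.sum_eq_zero
  intro i _
  show u i * 0 = 0
  open Fin.CommRing in ring

section main
variable (A : Finset (Fin m → Fin 3))

def gA : (Fin m → Fin 3) → ℂ := fun u => if u ∈ A then 1 else 0

lemma gA_conj (u : Fin m → Fin 3) : (starRingEnd ℂ) (gA A u) = gA A u := by
  rw [gA]
  split <;> simp

noncomputable def SF (y : Fin m → Fin 3) : ℂ := ∑ u, gA A u * ch (ip u y)

lemma SF_conj (y : Fin m → Fin 3) :
    (starRingEnd ℂ) (SF A y) = ∑ v, gA A v * ch (ip (-v) y) := by
  rw [SF, map_sum]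
  refine Finset.sum_congr rfl fun v _ => ?_
  rw [map_mul, gA_conj, ch_conj, ip_neg]

lemma grand (w : (Fin m → Fin 3) → ℤ) :
    ∑ y, (∑ z, (w z : ℂ) * ch (ip z y)) * (SF A y * (starRingEnd ℂ) (SF A y))
      = (3:ℂ)^m * ∑ u, ∑ v, (w (v - u) : ℂ) * gA A u * gA A v := by
  classical
  have step1 : ∀ y, (∑ z, (w z : ℂ) * ch (ip z y)) * (SF A y * (starRingEnd ℂ) (SF A y))
      = ∑ z, ∑ u, ∑ v, (w z : ℂ) * gA A u * gA A v * ch (ip (z + u - v) y) := by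
    intro y
    rw [SF_conj, SF]
    rw [Finset.sum_mul_sum Finset.univ Finset.univ
      (fun u => gA A u * ch (ip u y)) (fun v => gA A v * ch (ip (-v) y))]
    rw [Finset.sum_mul_sum Finset.univ Finset.univ
      (fun z => (w z : ℂ) * ch (ip z y))
      (fun u => ∑ v, (gA A u * ch (ip u y)) * (gA A v * ch (ip (-v) y)))]
    refine Finset.sum_congr rfl fun z _ => ?_
    refine Finset.sum_congr rfl fun u _ => ?_
    rw [Finset.mul_sum]
    refine Finset.sum_congr rfl fun v _ => ?_
    have : ip (z + u - v) y = ip z y + ip u y + ip (-v) y := by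
      rw [sub_eq_add_neg, ip_add, ip_add]
    rw [this, ch_add, ch_add]
    ring
  rw [Finset.sum_congr rfl fun y _ => step1 y]
  rw [Finset.sum_comm]
  have step2 : ∀ z, ∑ y, ∑ u, ∑ v, (w z : ℂ) * gA A u * gA A v * ch (ip (z + u - v) y)
      = ∑ u, ∑ y, ∑ v, (w z : ℂ) * gA A u * gA A v * ch (ip (z + u - v) y) :=
    fun z => Finset.sum_comm
  rw [Finset.sum_congr rfl fun z _ => step2 z]
  have step3 : ∀ z u, ∑ y, ∑ v, (w z : ℂ) * gA A u * gA A v * ch (ip (z + u - v) y)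
      = ∑ v, (w z : ℂ) * gA A u * gA A v * (if z + u - v = 0 then (3:ℂ)^m else 0) := by
    intro z u
    rw [Finset.sum_comm]
    refine Finset.sum_congr rfl fun v _ => ?_
    rw [← Finset.mul_sum, orthG (z + u - v)]
  rw [Finset.sum_congr rfl fun z _ => Finset.sum_congr rfl fun u _ => step3 z u]
  -- now: ∑ z ∑ u ∑ v (w z) gu gv (ite ...) ; swap z,u then z,v then collapse z
  rw [Finset.sum_comm]
  refine Eq.trans (Finset.sum_congr rfl fun u _ => ?_) (Finset.mul_sum _ _ _).symm
  rw [Finset.sum_comm]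
  rw [Finset.mul_sum]
  refine Finset.sum_congr rfl fun v _ => ?_
  have hcond : ∀ z : Fin m → Fin 3, (z + u - v = 0) ↔ (z = v - u) := by
    intro z
    constructor
    · intro h
      have : z + u = v := by
        have := sub_eq_zero.1 h
        exact this
      rw [← this]
      abel
    · intro h
      rw [h]
      abel
  have : ∀ z, (w z : ℂ) * gA A u * gA A v * (if z + u - v = 0 then (3:ℂ)^m else 0)
      = if z = v - u then (w z : ℂ) * gA A u * gA A v * (3:ℂ)^m else 0 := by
    intro z
    by_cases h : z = v - u
    · rw [if_pos ((hcond z).2 h), if_pos h]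
    · rw [if_neg (fun hc => h ((hcond z).1 hc)), if_neg h]
      ring
  rw [Finset.sum_congr rfl fun z _ => this z]
  rw [Finset.sum_ite_eq' Finset.univ (v - u) (fun z => (w z : ℂ) * gA A u * gA A v * (3:ℂ)^m)]
  rw [if_pos (Finset.mem_univ _)]
  ring

lemma parseval :
    ∑ y, SF A y * (starRingEnd ℂ) (SF A y) = (3:ℂ)^m * ∑ u, gA A u * gA A u := by
  classical
  have step1 : ∀ y, SF A y * (starRingEnd ℂ) (SF A y)
      = ∑ u, ∑ v, gA A u * gA A v * ch (ip (u - v) y) := by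
    intro y
    rw [SF_conj, SF]
    rw [Finset.sum_mul_sum Finset.univ Finset.univ
      (fun u => gA A u * ch (ip u y)) (fun v => gA A v * ch (ip (-v) y))]
    refine Finset.sum_congr rfl fun u _ => Finset.sum_congr rfl fun v _ => ?_
    have : ip (u - v) y = ip u y + ip (-v) y := by
      rw [sub_eq_add_neg, ip_add]
    rw [this, ch_add]
    ring
  rw [Finset.sum_congr rfl fun y _ => step1 y, Finset.sum_comm]
  have step2 : ∀ u, ∑ y, ∑ v, gA A u * gA A v * ch (ip (u - v) y)
      = ∑ v, gA A u * gA A v * (if u - v = 0 then (3:ℂ)^m else 0) := by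
    intro u
    rw [Finset.sum_comm]
    refine Finset.sum_congr rfl fun v _ => ?_
    rw [← Finset.mul_sum, orthG (u - v)]
  rw [Finset.sum_congr rfl fun u _ => step2 u, Finset.mul_sum]
  refine Finset.sum_congr rfl fun u _ => ?_
  have : ∀ v, gA A u * gA A v * (if u - v = 0 then (3:ℂ)^m else 0)
      = if v = u then gA A u * gA A v * (3:ℂ)^m else 0 := by
    intro v
    by_cases h : v = u
    · rw [if_pos (by rw [h, sub_self]), if_pos h]
    · rw [if_neg (fun hc => h (sub_eq_zero.1 hc).symm), if_neg h]
      ring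
  rw [Finset.sum_congr rfl fun v _ => this v]
  rw [Finset.sum_ite_eq' Finset.univ u (fun v => gA A u * gA A v * (3:ℂ)^m)]
  rw [if_pos (Finset.mem_univ _)]
  ring

lemma SF_zero : SF A 0 = (A.card : ℂ) := by
  classical
  rw [SF]
  rw [Finset.sum_congr rfl fun u _ => by rw [ip_zero_right, ch_zero, mul_one]]
  unfold gA
  simp [gA, Finset.sum_boole, Finset.filter_mem_eq_inter]

end main



noncomputable def aZ (m : ℕ) (z : Fin m → Fin 3) : ℤ := 2 * eZ z + (4 - (m:ℤ)) * fZ z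

def Lam (y : Fin m → Fin 3) : ℤ := (-1)^(nzc y) * (4 - 3*(nzc y : ℤ)) * 2^(zc y)

lemma lamEq0 (a : ℕ) (ha : 1 ≤ a) :
    2 * ((a : ℤ) * ((-1:ℤ)^(0:ℕ) * 2^(a-1)) + ((0:ℕ) : ℤ) * ((-1:ℤ)^((0:ℕ)-1) * 2^a))
      + (4 - (a : ℤ)) * ((-1:ℤ)^(0:ℕ) * 2^a)
      = (-1 : ℤ)^(0:ℕ) * (4 - 3*((0:ℕ):ℤ)) * 2^a := by
  obtain ⟨a', rfl⟩ : ∃ a', a = a' + 1 := ⟨a - 1, by omega⟩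
  push_cast [pow_succ]
  ring

lemma lamVal (hm : 1 ≤ m) (y : Fin m → Fin 3) :
    ∑ z : Fin m → Fin 3, (aZ m z : ℂ) * ch (ip z y) = ((Lam y : ℤ) : ℂ) := by
  have expand : ∑ z : Fin m → Fin 3, (aZ m z : ℂ) * ch (ip z y)
      = 2 * (∑ z : Fin m → Fin 3, (eZ z : ℂ) * ch (ip z y))
        + (4 - (m:ℂ)) * (∑ z : Fin m → Fin 3, (fZ z : ℂ) * ch (ip z y)) := by
    rw [Finset.mul_sum, Finset.mul_sum, ← Finset.sum_add_distrib]
    refine Finset.sum_congr rfl fun z _ => ?_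
    rw [aZ]
    push_cast
    ring
  rw [expand, TFe, TFf, sumProdErase, prodS]
  have hfz : (Finset.univ.filter (fun j => y j = 0)).card = zc y := rfl
  have hfnz : (Finset.univ.filter (fun j => ¬ y j = 0)).card = nzc y := rfl
  rw [hfz, hfnz]
  have key : (2 : ℤ) * ((zc y : ℤ) * ((-1)^(nzc y) * 2^(zc y - 1))
          + (nzc y : ℤ) * ((-1)^(nzc y - 1) * 2^(zc y)))
        + (4 - (m : ℤ)) * ((-1)^(nzc y) * 2^(zc y)) = Lam y := by
    rcases Nat.eq_zero_or_pos (nzc y) with h0 | h1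
    · have hzc : zc y = m := by have := zc_add_nzc y; omega
      rw [Lam, h0, hzc]
      exact lamEq0 m hm
    · rw [Lam]
      exact lamEq (zc y) (nzc y) m (zc_add_nzc y) h1
  rw [← key]
  push_cast
  ring

lemma Lam_zero (hm : 2 ≤ m) : Lam (0 : Fin m → Fin 3) = 2^(m+2) := by
  have h1 : nzc (0 : Fin m → Fin 3) = 0 := by
    rw [nzc]
    convert Finset.card_empty
    rw [Finset.filter_eq_empty_iff]
    intro i _
    simp
  have h2 : zc (0 : Fin m → Fin 3) = m := by
    have := zc_add_nzc (0 : Fin m → Fin 3)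
    omega
  rw [Lam, h1, h2]
  have : (2:ℤ)^(m+2) = 2^m * 4 := by rw [pow_add]; norm_num
  rw [this]
  norm_num
  ring

lemma Lam_lb (hy : y ≠ (0 : Fin m → Fin 3)) : -2^(m-1) ≤ Lam y := by
  have hb : 1 ≤ nzc y := by
    obtain ⟨i, hi⟩ : ∃ i, y i ≠ 0 := by
      by_contra hc
      push_neg at hc
      exact hy (funext hc)
    exact Finset.card_pos.2 ⟨i, Finset.mem_filter.2 ⟨Finset.mem_univ i, hi⟩⟩
  have := lamLB (zc y) (nzc y) hb
  rw [zc_add_nzc y] at this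
  rw [Lam]
  exact this

lemma fZ_vanish (z : Fin m → Fin 3) (i : Fin m) (hzi : z i = 0) : fZ z = 0 := by
  apply Finset.prod_eq_zero (Finset.mem_univ i)
  rw [nz, if_pos hzi]

lemma eZ_vanish (z : Fin m → Fin 3) (i j : Fin m) (hij : i ≠ j)
    (hzi : z i = 0) (hzj : z j = 0) : eZ z = 0 := by
  rw [eZ]
  apply Finset.sum_eq_zero
  intro l _
  rcases ne_or_eq l i with hli | hli
  · have : ∏ j' ∈ Finset.univ.erase l, nz (z j') = 0 := by
      apply Finset.prod_eq_zero (Finset.mem_erase.2 ⟨Ne.symm hli, Finset.mem_univ i⟩)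
      rw [nz, if_pos hzi]
    rw [this, mul_zero]
  · have : ∏ j' ∈ Finset.univ.erase l, nz (z j') = 0 := by
      apply Finset.prod_eq_zero (Finset.mem_erase.2 ⟨?_, Finset.mem_univ j⟩)
      · rw [nz, if_pos hzj]
      · rw [hli]; exact Ne.symm hij
    rw [this, mul_zero]

theorem main_bound (m : ℕ) (hm : 2 ≤ m) (A : Finset (Fin m → Fin 3))
    (hA : ∀ u ∈ A, ∀ v ∈ A, u ≠ v → ∃ i j, i ≠ j ∧ u i = v i ∧ u j = v j) :
    A.card ≤ 3 ^ (m - 2) := by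
  classical
  -- two distinct indices in Fin m
  have hm1 : 1 ≤ m := by omega
  -- vanishing of aZ on differences
  have hvan : ∀ u ∈ A, ∀ v ∈ A, aZ m (v - u) = 0 := by
    intro u hu v hv
    rcases eq_or_ne u v with rfl | hne
    · have hz : ∀ i : Fin m, (u - u) i = 0 := fun i => by
        show u i - u i = 0; exact sub_self _
      rw [aZ, eZ_vanish (u - u) ⟨0, by omega⟩ ⟨1, by omega⟩ (by simp [Fin.ext_iff]) (hz _) (hz _),
        fZ_vanish (u - u) ⟨0, by omega⟩ (hz _)]
      ring
    · obtain ⟨i, j, hij, hui, huj⟩ := hA u hu v hv hne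
      have hzi : (v - u) i = 0 := by show v i - u i = 0; rw [hui.symm, sub_self]
      have hzj : (v - u) j = 0 := by show v j - u j = 0; rw [huj.symm, sub_self]
      rw [aZ, eZ_vanish (v - u) i j hij hzi hzj, fZ_vanish (v - u) i hzi]
      ring
  -- grand identity with vanishing RHS
  have hgrand := grand A (aZ m)
  have hRHS : ∑ u, ∑ v, (aZ m (v - u) : ℂ) * gA A u * gA A v = 0 := by
    apply Finset.sum_eq_zero
    intro u _
    apply Finset.sum_eq_zero
    intro v _
    by_cases hu : u ∈ A
    · by_cases hv : v ∈ A
      · rw [hvan u hu v hv]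
        norm_num
      · have hgv : gA A v = 0 := if_neg hv
        rw [hgv]
        ring
    · have hgu : gA A u = 0 := if_neg hu
      rw [hgu]
      ring
  rw [hRHS, mul_zero] at hgrand
  -- insert lambda values
  have hlam : ∑ y, ((Lam y : ℤ) : ℂ) * (SF A y * (starRingEnd ℂ) (SF A y)) = 0 := by
    rw [← hgrand]
    exact Finset.sum_congr rfl fun y _ => by rw [lamVal hm1 y]
  -- pass to real parts
  set R : (Fin m → Fin 3) → ℝ := fun y => Complex.normSq (SF A y) with hR
  have hmc : ∀ y, SF A y * (starRingEnd ℂ) (SF A y) = ((R y : ℝ) : ℂ) := fun y =>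
    Complex.mul_conj (SF A y)
  have hreal : ∑ y, (Lam y : ℝ) * R y = 0 := by
    have : ((∑ y, (Lam y : ℝ) * R y : ℝ) : ℂ) = 0 := by
      rw [Complex.ofReal_sum]
      rw [← hlam]
      refine Finset.sum_congr rfl fun y _ => ?_
      rw [hmc y]
      push_cast
      ring
    exact_mod_cast this
  -- Parseval, real form
  have hsumgg : ∑ u, gA A u * gA A u = (A.card : ℂ) := by
    have : ∀ u, gA A u * gA A u = gA A u := fun u => by
      rw [gA]; split <;> ring
    rw [Finset.sum_congr rfl fun u _ => this u]
    unfold gA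
    simp [gA, Finset.sum_boole, Finset.filter_mem_eq_inter]
  have hpar : ∑ y, R y = 3^m * (A.card : ℝ) := by
    have hc : ((∑ y, R y : ℝ) : ℂ) = (((3:ℝ)^m * (A.card : ℝ) : ℝ) : ℂ) := by
      rw [Complex.ofReal_sum]
      rw [Finset.sum_congr rfl fun y _ => (hmc y).symm, parseval A, hsumgg]
      push_cast
      ring
    exact_mod_cast hc
  have hR0 : R 0 = (A.card : ℝ)^2 := by
    rw [hR]
    show Complex.normSq (SF A 0) = _
    rw [SF_zero A]
    rw [show ((A.card : ℂ)) = (((A.card : ℝ)) : ℂ) by push_cast; ring]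
    rw [Complex.normSq_ofReal]
    ring
  -- final inequality chain
  set c : ℝ := (A.card : ℝ) with hc
  have hRnonneg : ∀ y, 0 ≤ R y := fun y => Complex.normSq_nonneg _
  have hsplit : (Lam (0 : Fin m → Fin 3) : ℝ) * R 0 + ∑ y ∈ Finset.univ.erase (0 : Fin m → Fin 3), (Lam y : ℝ) * R y = 0 := by
    rw [← hreal]
    rw [add_comm]
    exact Finset.sum_erase_add _ _ (Finset.mem_univ 0)
  have hbound : ∀ y ∈ Finset.univ.erase (0 : Fin m → Fin 3),
      -(2:ℝ)^(m-1) * R y ≤ (Lam y : ℝ) * R y := by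
    intro y hy
    apply mul_le_mul_of_nonneg_right _ (hRnonneg y)
    have := Lam_lb (Finset.mem_erase.1 hy).1
    have h2 : ((-2^(m-1) : ℤ) : ℝ) ≤ ((Lam y : ℤ) : ℝ) := Int.cast_le.2 this
    push_cast at h2
    exact h2
  have hErase : ∑ y ∈ Finset.univ.erase (0 : Fin m → Fin 3), R y = 3^m * c - c^2 := by
    have := Finset.sum_erase_add Finset.univ R (Finset.mem_univ (0 : Fin m → Fin 3))
    rw [hpar] at this
    rw [hR0] at this
    linarith
  have hsum_lb : -(2:ℝ)^(m-1) * (3^m * c - c^2) ≤ ∑ y ∈ Finset.univ.erase (0:Fin m → Fin 3), (Lam y : ℝ) * R y := by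
    rw [← hErase, Finset.mul_sum]
    exact Finset.sum_le_sum hbound
  have hL0 : (Lam (0 : Fin m → Fin 3) : ℝ) = 2^(m+2) := by
    rw [Lam_zero hm]
    push_cast
    ring
  have hmain : (2:ℝ)^(m+2) * c^2 ≤ 2^(m-1) * (3^m * c - c^2) := by
    have h1 : (Lam (0:Fin m → Fin 3) : ℝ) * R 0 + (-(2:ℝ)^(m-1) * (3^m * c - c^2)) ≤ 0 := by
      calc (Lam (0:Fin m → Fin 3) : ℝ) * R 0 + (-(2:ℝ)^(m-1) * (3^m * c - c^2))
          ≤ (Lam (0:Fin m → Fin 3) : ℝ) * R 0 + ∑ y ∈ Finset.univ.erase (0:Fin m → Fin 3), (Lam y : ℝ) * R y := by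
            linarith [hsum_lb]
        _ = 0 := hsplit
    rw [hL0, hR0] at h1
    linarith
  -- conclude 9 * c ≤ 3^m
  have hpow : (2:ℝ)^(m+2) = 8 * 2^(m-1) := by
    have : m + 2 = (m-1) + 3 := by omega
    rw [this, pow_add]
    ring
  have h9 : 9 * c^2 ≤ 3^m * c := by
    have h2pos : (0:ℝ) < 2^(m-1) := by positivity
    rw [hpow] at hmain
    nlinarith
  have hcnn : 0 ≤ c := Nat.cast_nonneg _
  have hfin : 9 * c ≤ 3^m := by
    rcases eq_or_lt_of_le hcnn with h0 | hpos
    · rw [← h0]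
      nlinarith [pow_pos (by norm_num : (0:ℝ) < 3) m]
    · have hmul : 9 * c * c ≤ 3^m * c := by
        calc 9 * c * c = 9 * c^2 := by ring
          _ ≤ 3^m * c := h9
      exact le_of_mul_le_mul_right hmul hpos
  have h3m : (3:ℝ)^m = 9 * 3^(m-2) := by
    have : m = (m-2) + 2 := by omega
    rw [this]
    rw [pow_add]
    have h2 : m - 2 + 2 - 2 = m - 2 := by omega
    rw [h2]
    ring
  have hfinal : c ≤ 3^(m-2) := by
    rw [h3m] at hfin
    linarith
  have : (A.card : ℝ) ≤ ((3^(m-2) : ℕ) : ℝ) := by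
    push_cast
    exact hfinal
  exact_mod_cast this


/-- (Frankl–Tokushige, `q = 3`, `t = 2`.) A family of words in `{0,1,2}^(n-1)` any two of
which agree in at least two coordinates has size at most `3 ^ (n-3)`, for `n ≥ 3`. -/
theorem stmt_8 (n : ℕ) (hn : 3 ≤ n) (F : Set (Fin (n - 1) → Fin 3))
    (h : ∀ u ∈ F, ∀ v ∈ F, 2 ≤ {i | u i = v i}.ncard) :
    F.ncard ≤ 3 ^ (n - 3) := by
  classical
  have hm : 2 ≤ n - 1 := by omega
  have hfin : F.Finite := Set.toFinite F
  have hcard : F.ncard = hfin.toFinset.card := Set.ncard_eq_toFinset_card F hfin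
  have hA : ∀ u ∈ hfin.toFinset, ∀ v ∈ hfin.toFinset, u ≠ v →
      ∃ i j, i ≠ j ∧ u i = v i ∧ u j = v j := by
    intro u hu v hv _
    have hu' : u ∈ F := hfin.mem_toFinset.1 hu
    have hv' : v ∈ F := hfin.mem_toFinset.1 hv
    have h2 := h u hu' v hv'
    have hflt : {i | u i = v i}.Finite := Set.toFinite _
    obtain ⟨i, j, hi, hj, hij⟩ := (Set.one_lt_ncard_iff hflt).1 (by omega)
    exact ⟨i, j, hij, hi, hj⟩
  have := main_bound (n - 1) hm hfin.toFinset hA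
  rw [hcard]
  have hexp : n - 1 - 2 = n - 3 := by omega
  rw [hexp] at this
  exact this
end

section
/- Let F be a family of oriented graphs on vertex set [n] (n ≥ 3) such that for all G, H in F the intersection G ∩ H is strongly connected. Then |F| ≤ 3^(C(n,2)) / 3^n = 3^(C(n,2) - n). -/
def StronglyConnected {α : Type*} (G : Set (α × α)) : Prop :=
  ∀ x y : α, Relation.ReflTransGen (fun a b => (a, b) ∈ G) x y

/-- An oriented graph: no loops and at most one of the two arcs between any pair. -/
def IsOriented {α : Type*} (G : Set (α × α)) : Prop :=
  (∀ i, (i, i) ∉ G) ∧ ∀ i j, (i, j) ∈ G → (j, i) ∉ G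

open Finset

namespace SC9

def flip3 : Fin 3 → Fin 3 := fun a => if a = 0 then 2 else if a = 2 then 0 else 1

lemma flip3_eq_self {a : Fin 3} (h : flip3 a = a) : a = 1 := by revert h; revert a; decide

lemma flip3_inj : Function.Injective flip3 := by decide

theorem shearer (n : ℕ) (A : Finset (Fin n → Fin n → Fin 3))
    (hskew : ∀ M ∈ A, ∀ v w, M w v = flip3 (M v w)) :
    A.card ^ 2 ≤ ∏ v, (A.image (fun M => M v)).card := by
  classical
  induction n with
  | zero =>
    have : A.card ≤ 1 := Finset.card_le_one.2 (fun a _ b _ => Subsingleton.elim a b)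
    simpa using Nat.pow_le_pow_left this 2
  | succ n ih =>
    set L : Fin (n+1) := Fin.last n with hLdef
    set body : (Fin (n+1) → Fin (n+1) → Fin 3) → (Fin n → Fin n → Fin 3) :=
      fun M i j => M i.castSucc j.castSucc with hbodydef
    set R : Finset (Fin (n+1) → Fin 3) := A.image (fun M => M L) with hRdef
    set fib : (Fin (n+1) → Fin 3) → Finset (Fin (n+1) → Fin (n+1) → Fin 3) :=
      fun r => A.filter (fun M => M L = r) with hfibdef
    set Ar : (Fin (n+1) → Fin 3) → Finset (Fin n → Fin n → Fin 3) :=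
      fun r => (fib r).image body with hArdef
    have hcard : A.card = ∑ r ∈ R, (fib r).card :=
      Finset.card_eq_sum_card_fiberwise (fun M hM => Finset.mem_image_of_mem _ hM)
    have hfib_card : ∀ r ∈ R, (fib r).card = (Ar r).card := by
      intro r _
      refine (Finset.card_image_of_injOn ?_).symm
      intro M1 h1 M2 h2 hbody
      obtain ⟨h1A, h1r⟩ := Finset.mem_filter.1 h1
      obtain ⟨h2A, h2r⟩ := Finset.mem_filter.1 h2
      funext i j
      induction i using Fin.lastCases with
      | last =>
        have := congrFun (h1r.trans h2r.symm) j
        simpa using this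
      | cast i' =>
        induction j using Fin.lastCases with
        | last =>
          have e1 : M1 i'.castSucc L = flip3 (M1 L i'.castSucc) := hskew M1 h1A L i'.castSucc
          have e2 : M2 i'.castSucc L = flip3 (M2 L i'.castSucc) := hskew M2 h2A L i'.castSucc
          rw [e1, e2, congrFun h1r i'.castSucc, congrFun h2r i'.castSucc]
        | cast j' =>
          exact congrFun (congrFun hbody i') j'
    have hCS : A.card ^ 2 ≤ R.card * ∑ r ∈ R, (Ar r).card ^ 2 := by
      rw [hcard, Finset.sum_congr rfl hfib_card]
      exact sq_sum_le_card_mul_sum_sq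
    have hIH : ∀ r ∈ R, (Ar r).card ^ 2 ≤ ∏ v : Fin n, ((Ar r).image (fun M' => M' v)).card := by
      intro r _
      refine ih (Ar r) ?_
      intro M' hM' v w
      obtain ⟨M, hM, rfl⟩ := Finset.mem_image.1 hM'
      exact hskew M (Finset.mem_filter.1 hM).1 v.castSucc w.castSucc
    set g : Fin n → Fin 3 → ℕ := fun v a =>
      ((A.filter (fun M => M v.castSucc L = a)).image
        (fun M => (fun j : Fin n => M v.castSucc j.castSucc))).card with hgdef
    have hrow : ∀ r ∈ R, ∀ v : Fin n,
        ((Ar r).image (fun M' => M' v)).card ≤ g v (flip3 (r v.castSucc)) := by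
      intro r hr v
      refine Finset.card_le_card ?_
      intro x hx
      rw [hArdef] at hx
      simp only [Finset.image_image, Finset.mem_image] at hx
      obtain ⟨M, hM, rfl⟩ := hx
      obtain ⟨hMA, hMr⟩ := Finset.mem_filter.1 hM
      refine Finset.mem_image.2 ⟨M, Finset.mem_filter.2 ⟨hMA, ?_⟩, rfl⟩
      rw [hskew M hMA L v.castSucc, congrFun hMr v.castSucc]
    have h67 : ∑ r ∈ R, ∏ v : Fin n, g v (flip3 (r v.castSucc)) ≤
        ∏ v : Fin n, ∑ a : Fin 3, g v a := by
      have hinj : ∀ r1 ∈ R, ∀ r2 ∈ R,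
          (fun v : Fin n => flip3 (r1 v.castSucc)) = (fun v : Fin n => flip3 (r2 v.castSucc)) →
          r1 = r2 := by
        intro r1 h1 r2 h2 heq
        have hlast : ∀ r ∈ R, r L = 1 := by
          intro r hr
          obtain ⟨M, hM, rfl⟩ := Finset.mem_image.1 hr
          exact flip3_eq_self (hskew M hM L L).symm
        funext i
        induction i using Fin.lastCases with
        | last => rw [hlast r1 h1, hlast r2 h2]
        | cast i' => exact flip3_inj (congrFun heq i')
      calc ∑ r ∈ R, ∏ v : Fin n, g v (flip3 (r v.castSucc))
          = ∑ t ∈ R.image (fun r => (fun v : Fin n => flip3 (r v.castSucc))),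
              ∏ v : Fin n, g v (t v) := by
            rw [Finset.sum_image hinj]
        _ ≤ ∑ t ∈ (univ : Finset (Fin n → Fin 3)), ∏ v : Fin n, g v (t v) :=
            Finset.sum_le_sum_of_subset (Finset.subset_univ _)
        _ = ∏ v : Fin n, ∑ a : Fin 3, g v a := by
            rw [Finset.prod_univ_sum (fun _ => (univ : Finset (Fin 3))) g,
              Fintype.piFinset_univ]
    have h8 : ∀ v : Fin n, ∑ a : Fin 3, g v a ≤ (A.image (fun M => M v.castSucc)).card := by
      intro v
      set I : Fin 3 → Finset (Fin (n+1) → Fin 3) := fun a =>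
        (A.filter (fun M => M v.castSucc L = a)).image (fun M => M v.castSucc) with hIdef
      have hIval : ∀ a, ∀ x ∈ I a, x L = a := by
        intro a x hx
        obtain ⟨M, hM, rfl⟩ := Finset.mem_image.1 hx
        exact (Finset.mem_filter.1 hM).2
      have hga : ∀ a, g v a ≤ (I a).card := by
        intro a
        show ((A.filter (fun M => M v.castSucc L = a)).image
            (fun M => (fun j : Fin n => M v.castSucc j.castSucc))).card ≤
          ((A.filter (fun M => M v.castSucc L = a)).image (fun M => M v.castSucc)).card
        have : (A.filter (fun M => M v.castSucc L = a)).image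
            (fun M => (fun j : Fin n => M v.castSucc j.castSucc)) =
            ((A.filter (fun M => M v.castSucc L = a)).image (fun M => M v.castSucc)).image
              (fun row => (fun j : Fin n => row j.castSucc)) := by
          rw [Finset.image_image]
          rfl
        rw [this]
        exact Finset.card_image_le
      calc ∑ a : Fin 3, g v a ≤ ∑ a : Fin 3, (I a).card := Finset.sum_le_sum (fun a _ => hga a)
        _ = ((univ : Finset (Fin 3)).biUnion I).card := by
            refine (Finset.card_biUnion ?_).symm
            intro a _ b _ hab
            refine Finset.disjoint_left.2 (fun x hxa hxb => hab ?_)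
            rw [← hIval a x hxa, ← hIval b x hxb]
        _ ≤ (A.image (fun M => M v.castSucc)).card := by
            refine Finset.card_le_card ?_
            intro x hx
            obtain ⟨a, _, hxa⟩ := Finset.mem_biUnion.1 hx
            obtain ⟨M, hM, rfl⟩ := Finset.mem_image.1 hxa
            exact Finset.mem_image_of_mem _ (Finset.mem_filter.1 hM).1
    calc A.card ^ 2 ≤ R.card * ∑ r ∈ R, (Ar r).card ^ 2 := hCS
      _ ≤ R.card * ∑ r ∈ R, ∏ v : Fin n, g v (flip3 (r v.castSucc)) := by
          refine Nat.mul_le_mul_left _ (Finset.sum_le_sum (fun r hr => ?_))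
          exact (hIH r hr).trans (Finset.prod_le_prod' (fun v _ => hrow r hr v))
      _ ≤ R.card * ∏ v : Fin n, ∑ a : Fin 3, g v a := Nat.mul_le_mul_left _ h67
      _ ≤ R.card * ∏ v : Fin n, (A.image (fun M => M v.castSucc)).card :=
          Nat.mul_le_mul_left _ (Finset.prod_le_prod' (fun v _ => h8 v))
      _ = ∏ v : Fin (n+1), (A.image (fun M => M v)).card := by
          rw [Fin.prod_univ_castSucc]
          exact Nat.mul_comm _ _


lemma card_fixed_filter {W : Type*} [Fintype W] [DecidableEq W] (w₀ : W) :
    (univ.filter (fun u : W → Fin 3 => u w₀ = 0)).card = 3 ^ (Fintype.card W - 1) := by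
  classical
  have e : {u : W → Fin 3 // u w₀ = 0} ≃ ({w : W // w ≠ w₀} → Fin 3) :=
    { toFun := fun u w => u.1 w.1
      invFun := fun g => ⟨fun w => if h : w = w₀ then 0 else g ⟨w, h⟩, by simp⟩
      left_inv := by
        intro u
        ext w
        by_cases h : w = w₀
        · subst h; simp [u.2]
        · simp [h]
      right_inv := by
        intro g
        funext w
        simp [w.2] }
  have h1 : (univ.filter (fun u : W → Fin 3 => u w₀ = 0)).card
      = Fintype.card {u : W → Fin 3 // u w₀ = 0} := (Fintype.card_subtype _).symm
  have h2 : Fintype.card {w : W // w ≠ w₀} = Fintype.card W - 1 := by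
    have hc := Fintype.card_subtype_compl (fun w : W => w = w₀)
    simpa [Fintype.card_subtype_eq] using hc
  rw [h1, Fintype.card_congr e, Fintype.card_fun, Fintype.card_fin, h2]

lemma shift_bound {W : Type*} [Fintype W] [DecidableEq W] (w₀ : W) (E : Finset (W → Fin 3))
    (hE : ∀ u ∈ E, ∀ u' ∈ E, ∀ d : Fin 3, (∀ w, u' w = u w + d) → d = 0) :
    E.card ≤ 3 ^ (Fintype.card W - 1) := by
  classical
  have hinj : ∀ u ∈ E, ∀ u' ∈ E,
      (fun w => u w - u w₀) = (fun w => u' w - u' w₀) → u = u' := by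
    intro u hu u' hu' heq
    have hd : ∀ w, u' w = u w + (u' w₀ - u w₀) := by
      intro w
      have hw := congrFun heq w
      revert hw
      generalize u w = a; generalize u w₀ = b; generalize u' w = c; generalize u' w₀ = e
      revert a b c e; decide
    have hd0 := hE u hu u' hu' _ hd
    funext w
    have h2 := hd w
    rw [hd0] at h2
    simpa using h2.symm
  have himg : E.image (fun u => (fun w => u w - u w₀)) ⊆
      univ.filter (fun u : W → Fin 3 => u w₀ = 0) := by
    intro x hx
    obtain ⟨u, hu, rfl⟩ := Finset.mem_image.1 hx
    refine Finset.mem_filter.2 ⟨mem_univ _, ?_⟩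
    show u w₀ - u w₀ = 0
    generalize u w₀ = a; revert a; decide
  calc E.card = (E.image (fun u => (fun w => u w - u w₀))).card :=
        (Finset.card_image_of_injOn (fun u hu u' hu' => hinj u hu u' hu')).symm
    _ ≤ (univ.filter (fun u : W → Fin 3 => u w₀ = 0)).card := Finset.card_le_card himg
    _ = 3 ^ (Fintype.card W - 1) := card_fixed_filter w₀

theorem local_bound {W : Type*} [Fintype W] [DecidableEq W] (P : Finset (W → Fin 3))
    (h02 : ∀ s ∈ P, ∀ t ∈ P, (∃ w, s w = 0 ∧ t w = 0) ∧ (∃ w, s w = 2 ∧ t w = 2)) :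
    P.card ≤ 3 ^ (Fintype.card W - 2) := by
  classical
  rcases P.eq_empty_or_nonempty with rfl | ⟨s₀, hs₀⟩
  · simp
  obtain ⟨⟨w1, hw1, -⟩, ⟨w2, hw2, -⟩⟩ := h02 s₀ hs₀ s₀ hs₀
  have hw12 : w1 ≠ w2 := by
    intro e; rw [e, hw2] at hw1; exact absurd hw1 (by decide)
  have hcW : 2 ≤ Fintype.card W := by
    calc 2 = ({w1, w2} : Finset W).card := (Finset.card_pair hw12).symm
      _ ≤ (univ : Finset W).card := Finset.card_le_univ _
      _ = Fintype.card W := Finset.card_univ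
  set EA : Finset (W → Fin 3) :=
    univ.filter (fun u => ∃ s ∈ P, ∀ w, s w = 0 → u w = 0) with hEAdef
  set EB : Finset (W → Fin 3) :=
    univ.filter (fun u => ∃ s ∈ P, ∀ w, s w = 2 → u w = 2) with hEBdef
  have hPsub : P ⊆ EA ∩ EB := by
    intro s hs
    exact Finset.mem_inter.2 ⟨Finset.mem_filter.2 ⟨mem_univ _, ⟨s, hs, fun w hw => hw⟩⟩,
      Finset.mem_filter.2 ⟨mem_univ _, ⟨s, hs, fun w hw => hw⟩⟩⟩
  -- Harris negative correlation via the Four Functions Theorem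
  have sumind : ∀ S : Finset (W → Fin 3), ∑ u, (if u ∈ S then (1:ℕ) else 0) = S.card := by
    intro S
    rw [Finset.sum_ite_mem, Finset.univ_inter, ← Finset.card_eq_sum_ones]
  have le2 : ∀ x : Fin 3, x ≤ 2 := by decide
  have harris : (EA ∩ EB).card * 3 ^ (Fintype.card W) ≤ EA.card * EB.card := by
    have h4 := four_functions_theorem_univ
      (fun u : W → Fin 3 => if u ∈ EA ∩ EB then (1:ℕ) else 0)
      (fun _ : W → Fin 3 => (1:ℕ))
      (fun u : W → Fin 3 => if u ∈ EA then (1:ℕ) else 0)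
      (fun u : W → Fin 3 => if u ∈ EB then (1:ℕ) else 0)
      (fun u => by positivity) (fun u => by positivity) (fun u => by positivity)
      (fun u => by positivity) ?_
    · rw [sumind, sumind, sumind] at h4
      have hconst : ∑ _u : W → Fin 3, (1:ℕ) = 3 ^ (Fintype.card W) := by
        rw [Finset.sum_const, Finset.card_univ, smul_eq_mul, mul_one, Fintype.card_fun,
          Fintype.card_fin]
      rw [hconst] at h4
      exact h4
    · intro a b
      show (if a ∈ EA ∩ EB then (1:ℕ) else 0) * 1 ≤
        (if a ⊓ b ∈ EA then (1:ℕ) else 0) * (if a ⊔ b ∈ EB then (1:ℕ) else 0)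
      by_cases ha : a ∈ EA ∩ EB
      · rw [if_pos ha]
        obtain ⟨haA, haB⟩ := Finset.mem_inter.1 ha
        obtain ⟨-, s, hs, hsa⟩ := Finset.mem_filter.1 haA
        obtain ⟨-, t, ht, hta⟩ := Finset.mem_filter.1 haB
        have hinf : a ⊓ b ∈ EA := by
          refine Finset.mem_filter.2 ⟨mem_univ _, s, hs, fun w hw => ?_⟩
          have h0 : a w = 0 := hsa w hw
          have : (a ⊓ b) w ≤ a w := inf_le_left
          exact le_antisymm (h0 ▸ this) (Fin.zero_le _)
        have hsup : a ⊔ b ∈ EB := by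
          refine Finset.mem_filter.2 ⟨mem_univ _, t, ht, fun w hw => ?_⟩
          have h2 : a w = 2 := hta w hw
          have hle : (a ⊔ b) w ≤ 2 := sup_le (h2 ▸ le_rfl) (le2 _)
          have hge : (2 : Fin 3) ≤ (a ⊔ b) w := h2 ▸ (le_sup_left : a w ≤ (a ⊔ b) w)
          exact le_antisymm hle hge
        rw [if_pos hinf, if_pos hsup]
      · rw [if_neg ha]
        exact Nat.zero_le _
  have hEAcard : EA.card ≤ 3 ^ (Fintype.card W - 1) := by
    refine shift_bound w1 EA ?_
    intro u hu u' hu' d hd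
    obtain ⟨-, s, hs, hsu⟩ := Finset.mem_filter.1 hu
    obtain ⟨-, s', hs', hsu'⟩ := Finset.mem_filter.1 hu'
    obtain ⟨⟨w, hws, hws'⟩, -⟩ := h02 s hs s' hs'
    have h1 : u w = 0 := hsu w hws
    have h2 : u' w = 0 := hsu' w hws'
    have h3 := hd w
    rw [h1, h2] at h3
    clear hd
    revert h3; revert d; decide
  have hEBcard : EB.card ≤ 3 ^ (Fintype.card W - 1) := by
    refine shift_bound w1 EB ?_
    intro u hu u' hu' d hd
    obtain ⟨-, s, hs, hsu⟩ := Finset.mem_filter.1 hu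
    obtain ⟨-, s', hs', hsu'⟩ := Finset.mem_filter.1 hu'
    obtain ⟨-, ⟨w, hws, hws'⟩⟩ := h02 s hs s' hs'
    have h1 : u w = 2 := hsu w hws
    have h2 : u' w = 2 := hsu' w hws'
    have h3 := hd w
    rw [h1, h2] at h3
    clear hd
    revert h3; revert d; decide
  have key : (EA ∩ EB).card * 3 ^ (Fintype.card W) ≤
      3 ^ (Fintype.card W - 2) * 3 ^ (Fintype.card W) := by
    calc (EA ∩ EB).card * 3 ^ (Fintype.card W) ≤ EA.card * EB.card := harris
      _ ≤ 3 ^ (Fintype.card W - 1) * 3 ^ (Fintype.card W - 1) :=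
          Nat.mul_le_mul hEAcard hEBcard
      _ = 3 ^ (Fintype.card W - 2) * 3 ^ (Fintype.card W) := by
          rw [← pow_add, ← pow_add]
          congr 1
          omega
  have hfinal : (EA ∩ EB).card ≤ 3 ^ (Fintype.card W - 2) :=
    Nat.le_of_mul_le_mul_right key (Nat.pow_pos (by norm_num))
  exact le_trans (Finset.card_le_card hPsub) hfinal


noncomputable def enc {n : ℕ} (G : Set (Fin n × Fin n)) : Fin n → Fin n → Fin 3 :=
  fun v w => by classical exact if (v, w) ∈ G then 0 else if (w, v) ∈ G then 2 else 1

lemma enc_eq_zero_iff {n : ℕ} (G : Set (Fin n × Fin n)) (v w : Fin n) :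
    enc G v w = 0 ↔ (v, w) ∈ G := by
  classical
  unfold enc
  by_cases h1 : (v, w) ∈ G
  · simp [h1]
  · by_cases h2 : (w, v) ∈ G <;> simp [h1, h2]

lemma enc_skew {n : ℕ} {G : Set (Fin n × Fin n)} (hG : IsOriented G) (v w : Fin n) :
    enc G w v = flip3 (enc G v w) := by
  classical
  unfold enc flip3
  by_cases h1 : (v, w) ∈ G
  · have h2 : (w, v) ∉ G := hG.2 v w h1
    simp [h1, h2]
  · by_cases h2 : (w, v) ∈ G
    · simp [h1, h2]
    · simp [h1, h2]

lemma enc_inj {n : ℕ} {G H : Set (Fin n × Fin n)} (he : enc G = enc H) : G = H := by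
  ext ⟨x, y⟩
  rw [← enc_eq_zero_iff G x y, ← enc_eq_zero_iff H x y, he]

lemma enc_eq_two {n : ℕ} {G : Set (Fin n × Fin n)} (hG : IsOriented G) {v w : Fin n}
    (h : (w, v) ∈ G) : enc G v w = 2 := by
  classical
  have h1 : (v, w) ∉ G := fun hc => hG.2 v w hc h
  unfold enc
  simp [h1, h]

lemma out_in_arcs {n : ℕ} (hn : 3 ≤ n) (D : Set (Fin n × Fin n))
    (hSC : StronglyConnected D) (v : Fin n) :
    (∃ w, (v, w) ∈ D) ∧ (∃ w, (w, v) ∈ D) := by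
  obtain ⟨u, hu⟩ : ∃ u : Fin n, u ≠ v := by
    rcases eq_or_ne v.val 0 with h0 | h0
    · refine ⟨⟨1, by omega⟩, fun e => ?_⟩
      have := congrArg Fin.val e
      simp only at this
      omega
    · refine ⟨⟨0, by omega⟩, fun e => ?_⟩
      have := congrArg Fin.val e
      simp only at this
      omega
  constructor
  · rcases (hSC v u).cases_head with heq | ⟨c, hc, -⟩
    · exact absurd heq.symm hu
    · exact ⟨c, hc⟩
  · rcases (hSC u v).cases_tail with heq | ⟨c, -, hc⟩
    · exact absurd heq (Ne.symm hu)
    · exact ⟨c, hc⟩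



theorem main (n : ℕ) (hn : 3 ≤ n) (F : Set (Set (Fin n × Fin n)))
    (hor : ∀ G ∈ F, IsOriented G)
    (h : ∀ G ∈ F, ∀ H ∈ F, StronglyConnected (G ∩ H)) :
    F.ncard ≤ 3 ^ (n.choose 2 - n) := by
  classical
  have hF : F.Finite := Set.toFinite F
  set Fs : Finset (Set (Fin n × Fin n)) := hF.toFinset with hFsdef
  have hncard : F.ncard = Fs.card := Set.ncard_eq_toFinset_card F hF
  have hmemF : ∀ G, G ∈ Fs ↔ G ∈ F := fun G => Set.Finite.mem_toFinset hF
  set A : Finset (Fin n → Fin n → Fin 3) := Fs.image (fun G => enc G) with hAdef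
  have hAcard : A.card = Fs.card :=
    Finset.card_image_of_injOn (fun G _ H _ he => enc_inj he)
  have hskew : ∀ M ∈ A, ∀ v w, M w v = flip3 (M v w) := by
    intro M hM v w
    obtain ⟨G, hG, rfl⟩ := Finset.mem_image.1 hM
    exact enc_skew (hor G ((hmemF G).1 hG)) v w
  -- row bound
  have hrows : ∀ v : Fin n, (A.image (fun M => M v)).card ≤ 3 ^ (n - 3) := by
    intro v
    have hdiag : ∀ r ∈ A.image (fun M => M v), r v = 1 := by
      intro r hr
      obtain ⟨M, hM, rfl⟩ := Finset.mem_image.1 hr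
      exact flip3_eq_self (hskew M hM v v).symm
    set P : Finset ({w : Fin n // w ≠ v} → Fin 3) :=
      (A.image (fun M => M v)).image (fun r => fun w : {w : Fin n // w ≠ v} => r w.1) with hPdef
    have hcardP : (A.image (fun M => M v)).card = P.card := by
      refine (Finset.card_image_of_injOn ?_).symm
      intro r hr r' hr' he
      funext w
      by_cases hw : w = v
      · rw [hw, hdiag r hr, hdiag r' hr']
      · exact congrFun he ⟨w, hw⟩
    have hcardW : Fintype.card {w : Fin n // w ≠ v} = n - 1 := by
      have hc := Fintype.card_subtype_compl (fun w : Fin n => w = v)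
      simpa [Fintype.card_subtype_eq] using hc
    have hcond : ∀ s ∈ P, ∀ t ∈ P,
        (∃ w, s w = 0 ∧ t w = 0) ∧ (∃ w, s w = 2 ∧ t w = 2) := by
      intro s hs t ht
      obtain ⟨rs, hrs, rfl⟩ := Finset.mem_image.1 hs
      obtain ⟨MG, hMG, rfl⟩ := Finset.mem_image.1 hrs
      obtain ⟨G, hG, rfl⟩ := Finset.mem_image.1 hMG
      obtain ⟨rt, hrt, rfl⟩ := Finset.mem_image.1 ht
      obtain ⟨MH, hMH, rfl⟩ := Finset.mem_image.1 hrt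
      obtain ⟨H, hH, rfl⟩ := Finset.mem_image.1 hMH
      have hGF := (hmemF G).1 hG
      have hHF := (hmemF H).1 hH
      have hSC := h G hGF H hHF
      obtain ⟨⟨w, hwout⟩, ⟨w', hwin⟩⟩ := out_in_arcs hn (G ∩ H) hSC v
      constructor
      · have hwne : w ≠ v := by
          intro e
          exact (hor G hGF).1 v (by rw [e] at hwout; exact hwout.1)
        refine ⟨⟨w, hwne⟩, ?_, ?_⟩
        · exact (enc_eq_zero_iff G v w).2 hwout.1
        · exact (enc_eq_zero_iff H v w).2 hwout.2
      · have hwne : w' ≠ v := by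
          intro e
          exact (hor G hGF).1 v (by rw [e] at hwin; exact hwin.1)
        refine ⟨⟨w', hwne⟩, ?_, ?_⟩
        · exact enc_eq_two (hor G hGF) hwin.1
        · exact enc_eq_two (hor H hHF) hwin.2
    calc (A.image (fun M => M v)).card = P.card := hcardP
      _ ≤ 3 ^ (Fintype.card {w : Fin n // w ≠ v} - 2) := local_bound P hcond
      _ = 3 ^ (n - 3) := by rw [hcardW]; congr 1
  -- Shearer
  have hsq : A.card ^ 2 ≤ 3 ^ ((n - 3) * n) := by
    refine (shearer n A hskew).trans ?_
    calc ∏ v, (A.image (fun M => M v)).card ≤ ∏ _v : Fin n, 3 ^ (n - 3) :=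
          Finset.prod_le_prod' (fun v _ => hrows v)
      _ = (3 ^ (n - 3)) ^ n := by rw [Finset.prod_const, Finset.card_univ, Fintype.card_fin]
      _ = 3 ^ ((n - 3) * n) := by rw [← pow_mul]
  -- arithmetic
  obtain ⟨m, rfl⟩ : ∃ m, n = m + 3 := ⟨n - 3, by omega⟩
  have hC : 2 * ((m + 3).choose 2) = (m + 3) * (m + 2) := by
    rw [Nat.choose_two_right]
    have h1 : m + 3 - 1 = m + 2 := by omega
    rw [h1]
    refine Nat.mul_div_cancel' ?_
    have he : Even ((m + 2) * (m + 3)) := Nat.even_mul_succ_self (m + 2)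
    rw [mul_comm] at he
    exact he.two_dvd
  have h2k : 2 * ((m + 3).choose 2 - (m + 3)) = (m + 3 - 3) * (m + 3) := by
    have hx : (m + 3) * (m + 2) = m * m + 5 * m + 6 := by ring
    have hy : (m + 3 - 3) * (m + 3) = m * m + 3 * m := by
      have : m + 3 - 3 = m := by omega
      rw [this]; ring
    rw [hx] at hC
    rw [hy]
    omega
  rw [hncard, ← hAcard]
  have hfinal : A.card ^ 2 ≤ (3 ^ ((m + 3).choose 2 - (m + 3))) ^ 2 := by
    rw [← pow_mul, mul_comm ((m + 3).choose 2 - (m + 3)) 2, h2k]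
    exact hsq
  exact (Nat.pow_le_pow_iff_left (by norm_num)).1 hfinal


end SC9

/-- A strongly-connected-intersecting family of oriented graphs on `[n]` has size at most
`3 ^ (C(n,2) - n)`. -/
theorem stmt_9 (n : ℕ) (hn : 3 ≤ n) (F : Set (Set (Fin n × Fin n)))
    (hor : ∀ G ∈ F, IsOriented G)
    (h : ∀ G ∈ F, ∀ H ∈ F, StronglyConnected (G ∩ H)) :
    F.ncard ≤ 3 ^ (n.choose 2 - n) := by
  exact SC9.main n hn F hor h
end

section
/- (Uniform Covers / Shearer for products) Let A ⊆ X_1 × ... × X_m be a finite set and let F_1, ..., F_k be subsets of [m] forming a uniform cover of multiplicity d (each coordinate lies in exactly d of the F_j). Then |A|^d ≤ ∏_{j=1}^k |π_{F_j}(A)|, where π_F denotes projection onto the coordinates in F. -/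
open Finset NNReal

section Mask
variable {m : ℕ} {X : Fin m → Type*} [∀ i, DecidableEq (X i)]

/-- Projection to coordinates in `F`, recorded as an `Option`-valued function on all of `Fin m`. -/
def omask (F : Finset (Fin m)) (f : ∀ i, X i) : ∀ i, Option (X i) :=
  fun i => if i ∈ F then some (f i) else none

lemma omask_univ_inj : Function.Injective (omask (X := X) Finset.univ) := by
  intro f g h
  funext i
  have := congrFun h i
  simpa [omask] using this

lemma card_image_omask_split (A : Finset (∀ i, X i)) (T : Finset (Fin m)) {i : Fin m}
    (hi : i ∈ T) :
    (A.image (omask T)).card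
      = ∑ x ∈ A.image (fun f => f i), ((A.filter (fun f => f i = x)).image (omask T)).card := by
  have hA : A = (A.image fun f => f i).biUnion (fun x => A.filter (fun f => f i = x)) := by
    ext f
    simp only [Finset.mem_biUnion, Finset.mem_filter, Finset.mem_image]
    constructor
    · intro hf; exact ⟨f i, ⟨f, hf, rfl⟩, hf, rfl⟩
    · rintro ⟨x, _, hf, _⟩; exact hf
  conv_lhs => rw [hA, Finset.biUnion_image]
  rw [Finset.card_biUnion]
  intro x hx y hy hxy
  simp only [Function.onFun]; rw [Finset.disjoint_left]
  intro g hgx hgy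
  obtain ⟨f, hf, rfl⟩ := Finset.mem_image.mp hgx
  obtain ⟨f', hf', he⟩ := Finset.mem_image.mp hgy
  have h1 : omask T f i = some x := by
    simp [omask, hi, (Finset.mem_filter.mp hf).2]
  have h2 : omask T f' i = some y := by
    simp [omask, hi, (Finset.mem_filter.mp hf').2]
  rw [he, h1] at h2
  exact hxy (Option.some.inj h2)

lemma card_image_omask_erase (A : Finset (∀ i, X i)) (T : Finset (Fin m)) {i : Fin m}
    (hi : i ∈ T) (x : X i) :
    ((A.filter (fun f => f i = x)).image (omask T)).card
      = ((A.filter (fun f => f i = x)).image (omask (T.erase i))).card := by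
  set B := A.filter (fun f => f i = x) with hB
  have himg : B.image (omask T) = (B.image (omask (T.erase i))).image
      (fun g => Function.update g i (some x)) := by
    rw [Finset.image_image]
    apply Finset.image_congr
    intro f hf
    have hfx : f i = x := (Finset.mem_filter.mp hf).2
    funext i'
    by_cases h : i' = i
    · subst h
      simp [omask, hi, hfx, Function.update_self]
    · simp [omask, Function.update_of_ne h, Finset.mem_erase, h]
  rw [himg]
  apply Finset.card_image_of_injOn
  intro g hg g' hg' he
  have hgi : g i = none := by
    obtain ⟨f, _, rfl⟩ := Finset.mem_image.mp (by exact_mod_cast hg)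
    simp [omask]
  have hgi' : g' i = none := by
    obtain ⟨f, _, rfl⟩ := Finset.mem_image.mp (by exact_mod_cast hg')
    simp [omask]
  funext i'
  by_cases h : i' = i
  · subst h; rw [hgi, hgi']
  · simpa [Function.update_of_ne h] using congrFun he i'

end Mask

lemma my_holder {α ι : Type*} (s : Finset α) (D : Finset ι) (hD : D.Nonempty)
    (f : ι → α → ℝ≥0) :
    ∑ x ∈ s, ∏ j ∈ D, f j x ≤ ∏ j ∈ D, (∑ x ∈ s, f j x ^ (D.card)) ^ ((D.card : ℝ)⁻¹) := by
  set d : ℕ := D.card with hd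
  have hd0 : (d : ℝ≥0) ≠ 0 := Nat.cast_ne_zero.mpr (Finset.card_ne_zero.mpr hD)
  have hdR : (d : ℝ) ≠ 0 := Nat.cast_ne_zero.mpr (Finset.card_ne_zero.mpr hD)
  set T : ι → ℝ≥0 := fun j => ∑ x ∈ s, f j x ^ d with hT
  by_cases h0 : ∃ j ∈ D, T j = 0
  · obtain ⟨j₀, hj₀, hTj₀⟩ := h0
    have hz : ∀ x ∈ s, f j₀ x = 0 := by
      intro x hx
      have := (Finset.sum_eq_zero_iff.mp hTj₀) x hx
      exact pow_eq_zero_iff (Finset.card_ne_zero.mpr hD) |>.mp this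
    have : ∑ x ∈ s, ∏ j ∈ D, f j x = 0 := by
      apply Finset.sum_eq_zero
      intro x hx
      exact Finset.prod_eq_zero hj₀ (hz x hx)
    simp [this]
  · push_neg at h0
    -- all T j ≠ 0
    have hw : ∑ _j ∈ D, (d : ℝ≥0)⁻¹ = 1 := by
      rw [Finset.sum_const, ← hd, nsmul_eq_mul]
      exact mul_inv_cancel₀ hd0
    have key : ∀ x ∈ s, ∏ j ∈ D, (f j x / T j ^ ((d:ℝ)⁻¹)) ≤ ∑ j ∈ D, (d : ℝ≥0)⁻¹ * (f j x ^ d / T j) := by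
      intro x hx
      have := NNReal.geom_mean_le_arith_mean_weighted D (fun _ => (d : ℝ≥0)⁻¹)
        (fun j => f j x ^ d / T j) hw
      refine le_trans (le_of_eq ?_) this
      apply Finset.prod_congr rfl
      intro j hj
      have : ((((d : ℝ≥0))⁻¹ : ℝ≥0) : ℝ) = ((d:ℝ))⁻¹ := by push_cast; ring
      rw [this, NNReal.div_rpow, ← NNReal.rpow_natCast (f j x) d, ← NNReal.rpow_mul,
        mul_inv_cancel₀ hdR, NNReal.rpow_one]
    have hTne : ∀ j ∈ D, T j ^ ((d:ℝ)⁻¹) ≠ 0 := by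
      intro j hj
      simp [NNReal.rpow_eq_zero_iff, h0 j hj]
    have hsum1 : ∑ x ∈ s, ∏ j ∈ D, (f j x / T j ^ ((d:ℝ)⁻¹)) ≤ 1 := by
      calc ∑ x ∈ s, ∏ j ∈ D, (f j x / T j ^ ((d:ℝ)⁻¹))
          ≤ ∑ x ∈ s, ∑ j ∈ D, (d:ℝ≥0)⁻¹ * (f j x ^ d / T j) := Finset.sum_le_sum key
        _ = ∑ j ∈ D, (d:ℝ≥0)⁻¹ * (T j / T j) := by
            rw [Finset.sum_comm]
            apply Finset.sum_congr rfl
            intro j hj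
            rw [← Finset.mul_sum, ← Finset.sum_div]
        _ = ∑ _j ∈ D, (d:ℝ≥0)⁻¹ := by
            apply Finset.sum_congr rfl
            intro j hj
            rw [div_self (h0 j hj), mul_one]
        _ = 1 := hw
    calc ∑ x ∈ s, ∏ j ∈ D, f j x
        = ∑ x ∈ s, (∏ j ∈ D, (f j x / T j ^ ((d:ℝ)⁻¹))) * ∏ j ∈ D, T j ^ ((d:ℝ)⁻¹) := by
          apply Finset.sum_congr rfl
          intro x hx
          rw [← Finset.prod_mul_distrib]
          apply Finset.prod_congr rfl
          intro j hj
          rw [div_mul_cancel₀ _ (hTne j hj)]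
      _ = (∑ x ∈ s, ∏ j ∈ D, (f j x / T j ^ ((d:ℝ)⁻¹))) * ∏ j ∈ D, T j ^ ((d:ℝ)⁻¹) := by
          rw [Finset.sum_mul]
      _ ≤ 1 * ∏ j ∈ D, T j ^ ((d:ℝ)⁻¹) := by gcongr
      _ = ∏ j ∈ D, T j ^ ((d:ℝ)⁻¹) := one_mul _

lemma shearer_key {m k d : ℕ} (hd : 0 < d) {X : Fin m → Type*} [∀ i, DecidableEq (X i)]
    (S : Finset (Fin m)) : ∀ (F : Fin k → Finset (Fin m)),
      (∀ j, F j ⊆ S) → (∀ i ∈ S, (Finset.univ.filter fun j => i ∈ F j).card = d) →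
      ∀ A : Finset ((i : Fin m) → X i),
      ((A.image (omask S)).card : ℝ≥0) ^ d
        ≤ ∏ j : Fin k, ((A.image (omask (F j))).card : ℝ≥0) := by
  induction S using Finset.strongInduction with
  | _ S ih =>
  intro F hsub hcov A
  have hdR : (d : ℝ) ≠ 0 := Nat.cast_ne_zero.mpr hd.ne'
  rcases S.eq_empty_or_nonempty with rfl | ⟨i, hi⟩
  · -- base case `S = ∅`
    have hFj : ∀ j, F j = ∅ := fun j => Finset.subset_empty.mp (hsub j)
    have hmask : omask (∅ : Finset (Fin m)) = fun (_ : ∀ i, X i) => (fun i => (none : Option (X i))) := by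
      funext f i; simp [omask]
    rcases A.eq_empty_or_nonempty with rfl | hA
    · simp [zero_pow hd.ne']
    · have h1 : ∀ (T : Finset (Fin m)), T = ∅ → (A.image (omask T)).card = 1 := by
        intro T hT
        subst hT
        rw [hmask, Finset.image_const hA, Finset.card_singleton]
      rw [h1 ∅ rfl]
      have : ∀ j : Fin k, ((A.image (omask (F j))).card : ℝ≥0) = 1 := by
        intro j; rw [h1 (F j) (hFj j)]; norm_num
      rw [Finset.prod_congr rfl (fun j _ => this j), Finset.prod_const_one]
      norm_num
  · -- inductive step: remove coordinate `i`
    set S' := S.erase i with hS'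
    have hSS : S' ⊂ S := Finset.erase_ssubset hi
    set F' : Fin k → Finset (Fin m) := fun j => (F j).erase i with hF'e
    have hsub' : ∀ j, F' j ⊆ S' := fun j => Finset.erase_subset_erase _ (hsub j)
    have hcov' : ∀ i' ∈ S', (Finset.univ.filter fun j => i' ∈ F' j).card = d := by
      intro i' hi'
      have hne : i' ≠ i := Finset.ne_of_mem_erase hi'
      have heq : (Finset.univ.filter fun j => i' ∈ F' j)
          = (Finset.univ.filter fun j => i' ∈ F j) := by
        apply Finset.filter_congr
        intro j _
        simp [hF'e, Finset.mem_erase, hne]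
      rw [heq]
      exact hcov i' (Finset.mem_of_mem_erase hi')
    set V := A.image (fun f => f i) with hV
    set Ax : X i → Finset ((i : Fin m) → X i) := fun x => A.filter (fun f => f i = x) with hAx
    set D := Finset.univ.filter (fun j : Fin k => i ∈ F j) with hDdef
    have hD : D.card = d := hcov i hi
    have hDne : D.Nonempty := Finset.card_pos.mp (by rw [hD]; exact hd)
    set a : X i → ℝ≥0 := fun x => (((Ax x).image (omask S')).card : ℝ≥0) with ha
    set t : Fin k → X i → ℝ≥0 := fun j x => (((Ax x).image (omask (F' j))).card : ℝ≥0) with ht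
    set P : ℝ≥0 := ∏ j ∈ Dᶜ, ((A.image (omask (F j))).card : ℝ≥0) with hP
    -- pointwise bound from the induction hypothesis
    have hpoint : ∀ x, a x ^ d ≤ (∏ j ∈ D, t j x) * P := by
      intro x
      have h1 : a x ^ d ≤ ∏ j, t j x := ih S' hSS F' hsub' hcov' (Ax x)
      have h2 : (∏ j ∈ D, t j x) * (∏ j ∈ Dᶜ, t j x) = ∏ j, t j x :=
        Finset.prod_mul_prod_compl D _
      have h3 : ∏ j ∈ Dᶜ, t j x ≤ P := by
        apply Finset.prod_le_prod' 
        intro j hj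
        have hij : i ∉ F j := by
          have := Finset.mem_compl.mp hj
          simpa [hDdef] using this
        have hFj : F' j = F j := Finset.erase_eq_of_notMem hij
        rw [ht]
        simp only [hFj]
        exact_mod_cast Nat.cast_le.mpr
          (Finset.card_le_card (Finset.image_subset_image (Finset.filter_subset _ _)))
      calc a x ^ d ≤ ∏ j, t j x := h1
        _ = (∏ j ∈ D, t j x) * (∏ j ∈ Dᶜ, t j x) := h2.symm
        _ ≤ (∏ j ∈ D, t j x) * P := by exact mul_le_mul_right h3 _
    -- decomposition of the cardinalities as sums over slices
    have hLHS : ((A.image (omask S)).card : ℝ≥0) = ∑ x ∈ V, a x := by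
      rw [card_image_omask_split A S hi]
      push_cast
      apply Finset.sum_congr rfl
      intro x hx
      rw [card_image_omask_erase A S hi x]
    have hRHSj : ∀ j ∈ D, ((A.image (omask (F j))).card : ℝ≥0) = ∑ x ∈ V, t j x := by
      intro j hj
      have hij : i ∈ F j := by simpa [hDdef] using hj
      rw [card_image_omask_split A (F j) hij]
      push_cast
      apply Finset.sum_congr rfl
      intro x hx
      rw [card_image_omask_erase A (F j) hij x]
    -- Hölder step
    have hax : ∀ x, a x ≤ (∏ j ∈ D, t j x ^ ((d:ℝ)⁻¹)) * P ^ ((d:ℝ)⁻¹) := by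
      intro x
      calc a x = (a x ^ d) ^ ((d:ℝ)⁻¹) := by
            rw [← NNReal.rpow_natCast (a x) d, ← NNReal.rpow_mul, mul_inv_cancel₀ hdR,
              NNReal.rpow_one]
        _ ≤ ((∏ j ∈ D, t j x) * P) ^ ((d:ℝ)⁻¹) :=
            NNReal.rpow_le_rpow (hpoint x) (by positivity)
        _ = (∏ j ∈ D, t j x ^ ((d:ℝ)⁻¹)) * P ^ ((d:ℝ)⁻¹) := by
            rw [NNReal.mul_rpow, NNReal.finset_prod_rpow]
    have hpowinv : ∀ c : ℝ≥0, (c ^ ((d:ℝ)⁻¹)) ^ d = c := by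
      intro c
      rw [← NNReal.rpow_natCast (c ^ ((d:ℝ)⁻¹)) d, ← NNReal.rpow_mul, inv_mul_cancel₀ hdR,
        NNReal.rpow_one]
    have hsum : ∑ x ∈ V, a x ≤ (∏ j ∈ D, (∑ x ∈ V, t j x) ^ ((d:ℝ)⁻¹)) * P ^ ((d:ℝ)⁻¹) := by
      calc ∑ x ∈ V, a x
          ≤ ∑ x ∈ V, (∏ j ∈ D, t j x ^ ((d:ℝ)⁻¹)) * P ^ ((d:ℝ)⁻¹) :=
            Finset.sum_le_sum fun x _ => hax x
        _ = (∑ x ∈ V, ∏ j ∈ D, t j x ^ ((d:ℝ)⁻¹)) * P ^ ((d:ℝ)⁻¹) := by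
            rw [Finset.sum_mul]
        _ ≤ (∏ j ∈ D, (∑ x ∈ V, (t j x ^ ((d:ℝ)⁻¹)) ^ D.card) ^ ((D.card : ℝ)⁻¹)) * P ^ ((d:ℝ)⁻¹) :=
            mul_le_mul_left (my_holder V D hDne _) _
        _ = (∏ j ∈ D, (∑ x ∈ V, t j x) ^ ((d:ℝ)⁻¹)) * P ^ ((d:ℝ)⁻¹) := by
            congr 1
            apply Finset.prod_congr rfl
            intro j _
            rw [hD]
            congr 1
            apply Finset.sum_congr rfl
            intro x _
            exact hpowinv (t j x)
    -- conclude
    rw [hLHS, ← Finset.prod_mul_prod_compl D fun j => ((A.image (omask (F j))).card : ℝ≥0),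
      Finset.prod_congr rfl hRHSj]
    calc (∑ x ∈ V, a x) ^ d
        ≤ ((∏ j ∈ D, (∑ x ∈ V, t j x) ^ ((d:ℝ)⁻¹)) * P ^ ((d:ℝ)⁻¹)) ^ d :=
          pow_le_pow_left₀ (zero_le) hsum d
      _ = (∏ j ∈ D, ∑ x ∈ V, t j x) * P := by
          rw [mul_pow, ← Finset.prod_pow, hpowinv P]
          congr 1
          apply Finset.prod_congr rfl
          intro j _
          exact hpowinv _

/-- Uniform Covers / Shearer inequality for products: if `F_1, …, F_k` cover each coordinate
of `[m]` exactly `d` times, then `|A| ^ d ≤ ∏_j |π_{F_j}(A)|`. -/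
theorem stmt_11 (m k d : ℕ) (hd : 0 < d) (X : Fin m → Type*) [∀ i, DecidableEq (X i)]
    (A : Finset ((i : Fin m) → X i)) (F : Fin k → Finset (Fin m))
    (hcover : ∀ i : Fin m, (Finset.univ.filter fun j => i ∈ F j).card = d) :
    A.card ^ d ≤ ∏ j : Fin k, (A.image fun f => fun i : {x // x ∈ F j} => f i.1).card := by
  have key := shearer_key (k := k) hd (X := X) Finset.univ F (fun j => Finset.subset_univ _)
    (fun i _ => hcover i) A
  have hAcard : (A.image (omask Finset.univ)).card = A.card :=
    Finset.card_image_of_injective _ omask_univ_inj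
  have hproj : ∀ j : Fin k, (A.image (omask (F j))).card
      = (A.image fun f => fun i : {x // x ∈ F j} => f i.1).card := by
    intro j
    set ext : (∀ i : {x // x ∈ F j}, X i.1) → (∀ i : Fin m, Option (X i)) :=
      fun g i => if h : i ∈ F j then some (g ⟨i, h⟩) else none with hext
    have hinj : Function.Injective ext := by
      intro g g' h
      funext i
      have := congrFun h i.1
      simp only [hext, dif_pos i.2] at this
      exact Option.some.inj this
    have hcomp : A.image (omask (F j)) = (A.image fun f => fun i : {x // x ∈ F j} => f i.1).image ext := by
      rw [Finset.image_image]
      apply Finset.image_congr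
      intro f _
      funext i
      by_cases h : i ∈ F j <;> simp [omask, hext, h]
    rw [hcomp, Finset.card_image_of_injective _ hinj]
  rw [hAcard] at key
  have hprod : (∏ j : Fin k, ((A.image (omask (F j))).card : ℝ≥0))
      = ∏ j : Fin k, ((A.image fun f => fun i : {x // x ∈ F j} => f i.1).card : ℝ≥0) := by
    apply Finset.prod_congr rfl
    intro j _
    exact congrArg Nat.cast (hproj j)
  rw [hprod] at key
  exact_mod_cast key
end

section
/- Let F be a family of graphs on vertex set [n] (n ≥ 3) such that for all G, H in F the intersection G ∩ H is 2-connected (equivalently: connected with at least 3 vertices and no cutvertex, i.e., deleting any vertex leaves a connected graph on the remaining n-1 vertices). Then |F| ≤ 2^(C(n,2) - n). -/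
set_option maxHeartbeats 1000000
set_option linter.unusedSectionVars false

open Finset

section Shearer
variable {E : Type*} [Fintype E] [DecidableEq E]

/-- zero out a function outside `B` -/
def ppi (B : Finset E) (f : E → Bool) : E → Bool := fun e => if e ∈ B then f e else false

lemma ppi_ppi {B C : Finset E} (h : B ⊆ C) (f : E → Bool) : ppi B (ppi C f) = ppi B f := by
  funext e; by_cases he : e ∈ B
  · simp [ppi, he, h he]
  · simp [ppi, he]

lemma ppi_not_mem {B : Finset E} {e : E} (he : e ∉ B) (f : E → Bool) : ppi B f e = false :=
  if_neg he

lemma ppi_mem {B : Finset E} {e : E} (he : e ∈ B) (f : E → Bool) : ppi B f e = f e :=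
  if_pos he

variable (F : Finset (E → Bool))

/-- size of the fiber of `g` under projection to `B` -/
def cnt (B : Finset E) (g : E → Bool) : ℕ := (F.filter fun f => ppi B f = ppi B g).card

lemma cnt_pos {B : Finset E} {g : E → Bool} (hg : g ∈ F) : 0 < cnt F B g :=
  card_pos.2 ⟨g, mem_filter.2 ⟨hg, rfl⟩⟩

lemma cnt_le_of_subset {B C : Finset E} (h : B ⊆ C) (g : E → Bool) :
    cnt F C g ≤ cnt F B g := by
  apply card_le_card
  intro f hf
  rw [mem_filter] at hf ⊢
  exact ⟨hf.1, by rw [← ppi_ppi h f, hf.2, ppi_ppi h]⟩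

lemma cnt_ppi {X C : Finset E} (h : X ⊆ C) (g : E → Bool) : cnt F X (ppi C g) = cnt F X g := by
  unfold cnt; rw [ppi_ppi h]

lemma cnt_eq_of_ppi_eq {X : Finset E} {g g' : E → Bool} (h : ppi X g = ppi X g') :
    cnt F X g = cnt F X g' := by
  unfold cnt; rw [h]

/-- `Φ B = ∑_{f ∈ F} log (cnt B f)`;  entropy of projection to `B` is `|F| log |F| - Φ B`. -/
noncomputable def phi (B : Finset E) : ℝ := ∑ f ∈ F, Real.log (cnt F B f)

lemma ppi_empty (f : E → Bool) : ppi (∅ : Finset E) f = fun _ => false := by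
  funext e; simp [ppi]

lemma phi_empty : phi F (∅ : Finset E) = F.card * Real.log F.card := by
  unfold phi cnt
  have : ∀ f ∈ F, Real.log ((F.filter fun g => ppi ∅ g = ppi ∅ f).card : ℕ)
      = Real.log F.card := by
    intro f _
    congr 2
    rw [filter_true_of_mem]
    intro g _
    rw [ppi_empty, ppi_empty]
  rw [Finset.sum_congr rfl this, Finset.sum_const, nsmul_eq_mul]

lemma ppi_univ (f : E → Bool) : ppi (univ : Finset E) f = f := by
  funext e; simp [ppi]

lemma phi_univ : phi F (univ : Finset E) = 0 := by
  unfold phi cnt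
  apply Finset.sum_eq_zero
  intro f hf
  have : (F.filter fun g => ppi univ g = ppi univ f) = {f} := by
    ext g
    simp only [mem_filter, ppi_univ, mem_singleton]
    exact ⟨fun h => h.2, fun h => ⟨by rw [h]; exact hf, h⟩⟩
  rw [this]
  simp

lemma phi_insert_le (B : Finset E) (e : E) : phi F (insert e B) ≤ phi F B := by
  apply Finset.sum_le_sum
  intro f hf
  have h1 : (0:ℝ) < cnt F (insert e B) f := by exact_mod_cast cnt_pos F hf
  apply Real.log_le_log h1
  exact_mod_cast cnt_le_of_subset F (subset_insert e B) f

/-- sum of reciprocals of fiber sizes = number of fibers -/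
lemma sum_inv_cnt (B : Finset E) :
    ∑ f ∈ F, ((cnt F B f : ℝ))⁻¹ = ((F.image (ppi B)).card : ℝ) := by
  classical
  rw [← Finset.sum_fiberwise_of_maps_to (g := ppi B) (t := F.image (ppi B))
      (fun f hf => mem_image_of_mem _ hf) (fun f => ((cnt F B f : ℝ))⁻¹)]
  rw [Finset.card_eq_sum_ones (F.image (ppi B)), Nat.cast_sum]
  apply Finset.sum_congr rfl
  intro v hv
  obtain ⟨f₀, hf₀, hvf₀⟩ := mem_image.1 hv
  have hcnt : ∀ f ∈ F.filter (fun f => ppi B f = v), cnt F B f = (F.filter (fun f => ppi B f = v)).card := by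
    intro f hf
    rw [mem_filter] at hf
    unfold cnt
    congr 1
    apply Finset.filter_congr
    intro g _
    rw [hf.2]
  rw [Finset.sum_congr rfl (fun f hf => by rw [hcnt f hf])]
  rw [Finset.sum_const, nsmul_eq_mul]
  have hpos : 0 < (F.filter (fun f => ppi B f = v)).card := by
    apply card_pos.2
    exact ⟨f₀, mem_filter.2 ⟨hf₀, hvf₀⟩⟩
  rw [mul_inv_cancel₀ (by exact_mod_cast hpos.ne')]
  simp

/-- entropy upper bound: `|F| log |F| - Φ B ≤ |F| * log (#image)` -/
lemma phi_lower (B : Finset E) (hF : F.Nonempty) :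
    (F.card : ℝ) * Real.log F.card - (F.card : ℝ) * Real.log ((F.image (ppi B)).card) ≤ phi F B := by
  classical
  set t : ℝ := ((F.image (ppi B)).card : ℝ) with ht
  have htpos : 0 < t := by
    have h : (F.image (ppi B)).Nonempty := hF.image _
    rw [ht]
    exact_mod_cast card_pos.2 h
  have hFpos : 0 < (F.card : ℝ) := by exact_mod_cast card_pos.2 hF
  have key : ∀ f ∈ F, Real.log (F.card : ℝ) - Real.log t - Real.log (cnt F B f)
      ≤ (F.card : ℝ) / (t * (cnt F B f)) - 1 := by
    intro f hf
    have hc : (0:ℝ) < (cnt F B f : ℝ) := by exact_mod_cast cnt_pos F hf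
    have hx : (0:ℝ) < (F.card : ℝ) / (t * (cnt F B f)) := by positivity
    have := Real.log_le_sub_one_of_pos hx
    rw [Real.log_div hFpos.ne' (by positivity), Real.log_mul htpos.ne' hc.ne'] at this
    linarith
  have hsum := Finset.sum_le_sum key
  rw [Finset.sum_sub_distrib, Finset.sum_sub_distrib, Finset.sum_const, Finset.sum_const,
    Finset.sum_sub_distrib, Finset.sum_const, nsmul_eq_mul, nsmul_eq_mul, nsmul_eq_mul,
    mul_one] at hsum
  have hdiv : ∑ f ∈ F, (F.card : ℝ) / (t * (cnt F B f)) = (F.card : ℝ) := by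
    have : ∀ f ∈ F, (F.card : ℝ) / (t * (cnt F B f))
        = ((F.card : ℝ)/t) * ((cnt F B f : ℝ))⁻¹ := by
      intro f hf; field_simp
    rw [Finset.sum_congr rfl this, ← Finset.mul_sum, sum_inv_cnt, ← ht]
    field_simp
  rw [hdiv] at hsum
  unfold phi
  linarith
end Shearer
section Shearer2
open Finset
variable {E : Type*} [Fintype E] [DecidableEq E] (F : Finset (E → Bool))

/-- the key "conditioning decreases entropy" inequality -/
lemma phi_quad {B C : Finset E} (e : E) (hBC : B ⊆ C) (heC : e ∉ C) :
    phi F C - phi F (insert e C) ≤ phi F B - phi F (insert e B) := by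
  classical
  set Be := insert e B with hBe
  set Ce := insert e C with hCe
  have hBBe : B ⊆ Be := subset_insert e B
  have hCCe : C ⊆ Ce := subset_insert e C
  have hBeCe : Be ⊆ Ce := insert_subset_insert e hBC
  have hBCe : B ⊆ Ce := hBC.trans hCCe
  -- the main counting estimate
  set Q : (E → Bool) → ℝ :=
    fun f => ((cnt F C f : ℝ) * (cnt F Be f) / ((cnt F Ce f) * (cnt F B f))) with hQ
  have main : ∑ f ∈ F, Q f ≤ (F.card : ℝ) := by
    rw [← Finset.sum_fiberwise_of_maps_to (g := ppi Ce) (t := F.image (ppi Ce))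
        (fun f hf => mem_image_of_mem _ hf) Q]
    -- inner sums over Ce-fibers
    have inner : ∀ v ∈ F.image (ppi Ce),
        ∑ f ∈ F.filter (fun f => ppi Ce f = v), Q f
          = (cnt F C v : ℝ) * (cnt F Be v) / (cnt F B v) := by
      intro v hv
      obtain ⟨f₀, hf₀, hvf₀⟩ := mem_image.1 hv
      have hQconst : ∀ f ∈ F.filter (fun f => ppi Ce f = v), Q f
          = ((cnt F C v : ℝ) * (cnt F Be v) / ((cnt F Ce v) * (cnt F B v))) := by
        intro f hf
        rw [mem_filter] at hf
        have h1 : cnt F C f = cnt F C v := by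
          apply cnt_eq_of_ppi_eq
          rw [← ppi_ppi hCCe f, hf.2]
        have h2 : cnt F Be f = cnt F Be v := by
          apply cnt_eq_of_ppi_eq
          rw [← ppi_ppi hBeCe f, hf.2]
        have h3 : cnt F Ce f = cnt F Ce v := by
          apply cnt_eq_of_ppi_eq
          rw [← ppi_ppi (Finset.Subset.refl Ce) f, hf.2]
        have h4 : cnt F B f = cnt F B v := by
          apply cnt_eq_of_ppi_eq
          rw [← ppi_ppi hBCe f, hf.2]
        simp only [hQ, h1, h2, h3, h4]
      rw [Finset.sum_congr rfl hQconst, Finset.sum_const, nsmul_eq_mul]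
      have hfibcard : (F.filter (fun f => ppi Ce f = v)).card = cnt F Ce v := by
        unfold cnt
        congr 1
        apply Finset.filter_congr
        intro g _
        have : ppi Ce v = v := by rw [← hvf₀, ppi_ppi (Finset.Subset.refl Ce)]
        rw [this]
      rw [hfibcard]
      have hCepos : (0:ℝ) < cnt F Ce v := by
        have : cnt F Ce v = cnt F Ce f₀ := by rw [← hvf₀, cnt_ppi F (Finset.Subset.refl Ce)]
        rw [this]; exact_mod_cast cnt_pos F hf₀
      have hBpos : (0:ℝ) < cnt F B v := by
        have : cnt F B v = cnt F B f₀ := by rw [← hvf₀, cnt_ppi F hBCe]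
        rw [this]; exact_mod_cast cnt_pos F hf₀
      field_simp
    rw [Finset.sum_congr rfl inner]
    -- now regroup the v's by their C-part
    rw [← Finset.sum_fiberwise_of_maps_to (g := ppi C) (t := F.image (ppi C))
        (fun v hv => by
          obtain ⟨f₀, hf₀, rfl⟩ := mem_image.1 hv
          rw [ppi_ppi hCCe]
          exact mem_image_of_mem _ hf₀)
        (fun v => (cnt F C v : ℝ) * (cnt F Be v) / (cnt F B v))]
    have step : ∀ w ∈ F.image (ppi C),
        ∑ v ∈ (F.image (ppi Ce)).filter (fun v => ppi C v = w),
          ((cnt F C v : ℝ) * (cnt F Be v) / (cnt F B v)) ≤ (cnt F C w : ℝ) := by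
      intro w hw
      obtain ⟨g₀, hg₀, hwg₀⟩ := mem_image.1 hw
      have hBposw : (0:ℝ) < cnt F B w := by
        have : cnt F B w = cnt F B g₀ := by rw [← hwg₀, cnt_ppi F hBC]
        rw [this]; exact_mod_cast cnt_pos F hg₀
      have hconst : ∀ v ∈ (F.image (ppi Ce)).filter (fun v => ppi C v = w),
          ((cnt F C v : ℝ) * (cnt F Be v) / (cnt F B v))
            = ((cnt F C w : ℝ) / (cnt F B w)) * (cnt F Be v) := by
        intro v hv
        rw [mem_filter] at hv
        have h1 : cnt F C v = cnt F C w := by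
          apply cnt_eq_of_ppi_eq
          rw [← ppi_ppi (Finset.Subset.refl C) v, hv.2]
        have h4 : cnt F B v = cnt F B w := by
          apply cnt_eq_of_ppi_eq
          rw [← ppi_ppi hBC v, hv.2]
        rw [h1, h4]; ring
      rw [Finset.sum_congr rfl hconst, ← Finset.mul_sum]
      have hkey : ∑ v ∈ (F.image (ppi Ce)).filter (fun v => ppi C v = w),
          ((cnt F Be v : ℝ)) ≤ (cnt F B w : ℝ) := by
        rw [← Nat.cast_sum]
        have hnat : ∑ v ∈ (F.image (ppi Ce)).filter (fun v => ppi C v = w), cnt F Be v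
            ≤ cnt F B w := by
          set I := (F.image (ppi Ce)).filter (fun v => ppi C v = w) with hI
          set Sv : (E → Bool) → Finset (E → Bool) :=
            fun v => F.filter (fun f => ppi Be f = ppi Be v) with hSv
          have hdisj : ∀ x ∈ I, ∀ y ∈ I, x ≠ y → Disjoint (Sv x) (Sv y) := by
            intro x hx y hy hxy
            rw [Finset.disjoint_left]
            intro f hfx hfy
            rw [hSv] at hfx hfy
            simp only [mem_filter] at hfx hfy
            apply hxy
            -- show x = y from equal Be-projections plus membership in I
            rw [hI, mem_filter] at hx hy
            obtain ⟨fx, _, hfx0⟩ := mem_image.1 hx.1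
            obtain ⟨fy, _, hfy0⟩ := mem_image.1 hy.1
            have hBex : ppi Be x = ppi Be y := by rw [← hfx.2, hfy.2]
            funext z
            by_cases hz : z ∈ Ce
            · rw [hCe, Finset.mem_insert] at hz
              rcases hz with rfl | hzC
              · -- z = e ∈ Be
                have := congrFun hBex z
                rwa [ppi_mem (mem_insert_self z B) x, ppi_mem (mem_insert_self z B) y] at this
              · have := congrFun (hx.2.trans hy.2.symm) z
                rwa [ppi_mem hzC x, ppi_mem hzC y] at this
            · rw [← hfx0, ← hfy0, ppi_not_mem hz, ppi_not_mem hz]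
          have hsub : I.biUnion Sv ⊆ F.filter (fun f => ppi B f = ppi B w) := by
            intro f hf
            rw [Finset.mem_biUnion] at hf
            obtain ⟨v, hvI, hfv⟩ := hf
            rw [hSv] at hfv
            rw [mem_filter] at hfv ⊢
            refine ⟨hfv.1, ?_⟩
            have h1 : ppi B f = ppi B v := by rw [← ppi_ppi hBBe f, hfv.2, ppi_ppi hBBe]
            rw [hI, mem_filter] at hvI
            have h2 : ppi B v = ppi B w := by rw [← ppi_ppi hBC v, hvI.2]
            rw [h1, h2]
          calc ∑ v ∈ I, cnt F Be v = ∑ v ∈ I, (Sv v).card := by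
                apply Finset.sum_congr rfl; intro v _; rfl
            _ = (I.biUnion Sv).card := (Finset.card_biUnion hdisj).symm
            _ ≤ (F.filter (fun f => ppi B f = ppi B w)).card := card_le_card hsub
            _ = cnt F B w := rfl
        exact_mod_cast hnat
      calc (cnt F C w : ℝ) / (cnt F B w) * ∑ v ∈ (F.image (ppi Ce)).filter (fun v => ppi C v = w), ((cnt F Be v : ℝ))
          ≤ (cnt F C w : ℝ) / (cnt F B w) * (cnt F B w) := by
            apply mul_le_mul_of_nonneg_left hkey
            positivity
        _ = (cnt F C w : ℝ) := by field_simp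
    calc ∑ w ∈ F.image (ppi C), ∑ v ∈ (F.image (ppi Ce)).filter (fun v => ppi C v = w),
          ((cnt F C v : ℝ) * (cnt F Be v) / (cnt F B v))
        ≤ ∑ w ∈ F.image (ppi C), (cnt F C w : ℝ) := Finset.sum_le_sum step
      _ = (F.card : ℝ) := by
          rw [← Nat.cast_sum]
          congr 1
          have := Finset.card_eq_sum_card_fiberwise
            (f := ppi C) (s := F) (t := F.image (ppi C)) (fun f hf => mem_image_of_mem _ hf)
          rw [this]
          apply Finset.sum_congr rfl
          intro w hw
          obtain ⟨g₀, _, hwg₀⟩ := mem_image.1 hw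
          unfold cnt
          congr 1
          apply Finset.filter_congr
          intro g _
          have : ppi C w = w := by rw [← hwg₀, ppi_ppi (Finset.Subset.refl C)]
          rw [this]
  -- pointwise log estimate
  have pointwise : ∀ f ∈ F,
      Real.log (cnt F C f) + Real.log (cnt F Be f) - Real.log (cnt F Ce f) - Real.log (cnt F B f)
        ≤ Q f - 1 := by
    intro f hf
    rw [hQ]
    have h1 : (0:ℝ) < cnt F C f := by exact_mod_cast cnt_pos F hf
    have h2 : (0:ℝ) < cnt F Be f := by exact_mod_cast cnt_pos F hf
    have h3 : (0:ℝ) < cnt F Ce f := by exact_mod_cast cnt_pos F hf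
    have h4 : (0:ℝ) < cnt F B f := by exact_mod_cast cnt_pos F hf
    have hx : (0:ℝ) < ((cnt F C f : ℝ) * (cnt F Be f) / ((cnt F Ce f) * (cnt F B f))) := by
      positivity
    have := Real.log_le_sub_one_of_pos hx
    rw [Real.log_div (by positivity) (by positivity), Real.log_mul h1.ne' h2.ne',
      Real.log_mul h3.ne' h4.ne'] at this
    linarith
  have hsum := Finset.sum_le_sum pointwise
  have hid : phi F C + phi F Be - phi F Ce - phi F B
      = ∑ f ∈ F, (Real.log (cnt F C f) + Real.log (cnt F Be f)
          - Real.log (cnt F Ce f) - Real.log (cnt F B f)) := by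
    unfold phi
    rw [← Finset.sum_add_distrib, ← Finset.sum_sub_distrib, ← Finset.sum_sub_distrib]
  have h6 : ∑ f ∈ F, (Q f - 1) = (∑ f ∈ F, Q f) - (F.card : ℝ) := by
    rw [Finset.sum_sub_distrib, Finset.sum_const, nsmul_eq_mul, mul_one]
  linarith
end Shearer2
section Shearer3
open Finset
variable {E : Type*} [Fintype E] [DecidableEq E]

/-- Shearer's inequality, combinatorial form, for families of Boolean functions. -/
theorem shearer_ineq {ι : Type*} [Fintype ι] (A : ι → Finset E) (k : ℕ) (hk : 1 ≤ k)
    (hcov : ∀ e : E, k ≤ (Finset.univ.filter (fun i => e ∈ A i)).card)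
    (F : Finset (E → Bool)) :
    F.card ^ k ≤ ∏ i, (F.image (ppi (A i))).card := by
  classical
  rcases F.eq_empty_or_nonempty with rfl | hF
  · simp only [Finset.card_empty]
    rw [Nat.zero_pow (by omega)]
    exact Nat.zero_le _
  set m := Fintype.card E with hm
  set ε : Fin m ≃ E := (Fintype.equivFin E).symm with hε
  set P : ℕ → Finset E := fun j => Finset.univ.filter (fun e => ((ε.symm e : Fin m) : ℕ) < j)
    with hP
  have hmemP : ∀ (j : ℕ) (e : E), e ∈ P j ↔ ((ε.symm e : Fin m) : ℕ) < j := by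
    intro j e; rw [hP]; simp
  have hP0 : P 0 = ∅ := by
    ext e; rw [hmemP]; simp
  have hPm : P m = Finset.univ := by
    ext e
    rw [hmemP]
    simp only [mem_univ, iff_true]
    exact (ε.symm e).isLt
  have hPsucc : ∀ (j : ℕ) (hj : j < m), P (j+1) = insert (ε ⟨j, hj⟩) (P j) := by
    intro j hj
    ext e
    rw [hmemP, Finset.mem_insert, hmemP]
    constructor
    · intro h
      rcases Nat.lt_succ_iff_lt_or_eq.1 h with h' | h'
      · exact Or.inr h'
      · left
        have : ε.symm e = ⟨j, hj⟩ := Fin.ext h'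
        calc e = ε (ε.symm e) := (ε.apply_symm_apply e).symm
          _ = ε ⟨j, hj⟩ := by rw [this]
    · rintro (rfl | h)
      · simp
      · exact Nat.lt_succ_of_lt h
  have heP : ∀ (j : ℕ) (hj : j < m), ε ⟨j, hj⟩ ∉ P j := by
    intro j hj
    rw [hmemP]
    simp
  -- per-projection chain rule bound
  have claim_i : ∀ i : ι,
      ∑ j ∈ Finset.range m,
          (if ∃ hj : j < m, ε ⟨j, hj⟩ ∈ A i then (phi F (P j) - phi F (P (j+1))) else 0)
        ≤ (F.card : ℝ) * Real.log F.card - phi F (A i) := by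
    intro i
    have tele : (F.card : ℝ) * Real.log F.card - phi F (A i)
        = ∑ j ∈ Finset.range m, (phi F (A i ∩ P j) - phi F (A i ∩ P (j+1))) := by
      rw [Finset.sum_range_sub' (fun j => phi F (A i ∩ P j)) m, hP0, hPm,
        Finset.inter_empty, Finset.inter_univ, phi_empty]
    rw [tele]
    apply Finset.sum_le_sum
    intro j hj
    have hjm : j < m := mem_range.1 hj
    by_cases hmem : ε ⟨j, hjm⟩ ∈ A i
    · rw [if_pos ⟨hjm, hmem⟩]
      have h1 : A i ∩ P (j+1) = insert (ε ⟨j,hjm⟩) (A i ∩ P j) := by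
        rw [hPsucc j hjm, Finset.inter_comm, Finset.insert_inter_of_mem hmem,
          Finset.inter_comm]
      rw [h1, hPsucc j hjm]
      exact phi_quad F (ε ⟨j,hjm⟩) Finset.inter_subset_right (heP j hjm)
    · rw [if_neg (by rintro ⟨h', hm'⟩; exact hmem hm')]
      have h1 : A i ∩ P (j+1) = A i ∩ P j := by
        rw [hPsucc j hjm, Finset.inter_comm, Finset.insert_inter_of_notMem hmem,
          Finset.inter_comm]
      rw [h1, sub_self]
  -- sum over i
  have hDnonneg : ∀ j ∈ Finset.range m, 0 ≤ phi F (P j) - phi F (P (j+1)) := by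
    intro j hj
    have hjm : j < m := mem_range.1 hj
    rw [hPsucc j hjm]
    have := phi_insert_le F (P j) (ε ⟨j,hjm⟩)
    linarith
  have hDsum : ∑ j ∈ Finset.range m, (phi F (P j) - phi F (P (j+1)))
      = (F.card : ℝ) * Real.log F.card := by
    rw [Finset.sum_range_sub' (fun j => phi F (P j)) m, hP0, hPm, phi_empty, phi_univ,
      sub_zero]
  have big : (k : ℝ) * ((F.card : ℝ) * Real.log F.card)
      ≤ ∑ i : ι, ((F.card : ℝ) * Real.log ((F.image (ppi (A i))).card)) := by
    have step1 : (k : ℝ) * ((F.card : ℝ) * Real.log F.card)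
        = ∑ j ∈ Finset.range m, (k : ℝ) * (phi F (P j) - phi F (P (j+1))) := by
      rw [← Finset.mul_sum, hDsum]
    have step2 : ∀ j ∈ Finset.range m,
        (k : ℝ) * (phi F (P j) - phi F (P (j+1)))
          ≤ ∑ i : ι, (if ∃ hj : j < m, ε ⟨j, hj⟩ ∈ A i
              then (phi F (P j) - phi F (P (j+1))) else 0) := by
      intro j hj
      have hjm : j < m := mem_range.1 hj
      have hfilt : (Finset.univ.filter (fun i : ι => ∃ hj : j < m, ε ⟨j, hj⟩ ∈ A i))
          = (Finset.univ.filter (fun i : ι => ε ⟨j, hjm⟩ ∈ A i)) := by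
        apply Finset.filter_congr
        intro i _
        constructor
        · rintro ⟨h', hm'⟩; exact hm'
        · intro h'; exact ⟨hjm, h'⟩
      rw [Finset.sum_ite, Finset.sum_const, Finset.sum_const_zero, add_zero, hfilt,
        nsmul_eq_mul]
      apply mul_le_mul_of_nonneg_right _ (hDnonneg j hj)
      exact_mod_cast hcov (ε ⟨j, hjm⟩)
    calc (k : ℝ) * ((F.card : ℝ) * Real.log F.card)
        = ∑ j ∈ Finset.range m, (k : ℝ) * (phi F (P j) - phi F (P (j+1))) := step1
      _ ≤ ∑ j ∈ Finset.range m, ∑ i : ι, (if ∃ hj : j < m, ε ⟨j, hj⟩ ∈ A i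
              then (phi F (P j) - phi F (P (j+1))) else 0) := Finset.sum_le_sum step2
      _ = ∑ i : ι, ∑ j ∈ Finset.range m, (if ∃ hj : j < m, ε ⟨j, hj⟩ ∈ A i
              then (phi F (P j) - phi F (P (j+1))) else 0) := Finset.sum_comm
      _ ≤ ∑ i : ι, ((F.card : ℝ) * Real.log F.card - phi F (A i)) :=
          Finset.sum_le_sum (fun i _ => claim_i i)
      _ ≤ ∑ i : ι, ((F.card : ℝ) * Real.log ((F.image (ppi (A i))).card) ) := by
          apply Finset.sum_le_sum
          intro i _
          have := phi_lower F (A i) hF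
          linarith
  -- conclude
  have hFpos : 0 < (F.card : ℝ) := by exact_mod_cast card_pos.2 hF
  have htpos : ∀ i : ι, 0 < ((F.image (ppi (A i))).card : ℝ) := by
    intro i
    exact_mod_cast card_pos.2 (hF.image _)
  have h2 : (k : ℝ) * Real.log F.card
      ≤ ∑ i : ι, Real.log ((F.image (ppi (A i))).card) := by
    have hb : (F.card : ℝ) * ((k:ℝ) * Real.log F.card)
        ≤ (F.card : ℝ) * ∑ i : ι, Real.log ((F.image (ppi (A i))).card) := by
      rw [Finset.mul_sum]
      calc (F.card : ℝ) * ((k:ℝ) * Real.log F.card)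
          = (k : ℝ) * ((F.card : ℝ) * Real.log F.card) := by ring
        _ ≤ ∑ i : ι, ((F.card : ℝ) * Real.log ((F.image (ppi (A i))).card)) := big
    exact le_of_mul_le_mul_left hb hFpos
  have hlog : Real.log ((F.card : ℝ) ^ k)
      ≤ Real.log (∏ i : ι, ((F.image (ppi (A i))).card : ℝ)) := by
    rw [Real.log_pow, Real.log_prod (fun i _ => (htpos i).ne')]
    exact h2
  have hfin : ((F.card : ℝ)) ^ k ≤ ∏ i : ι, ((F.image (ppi (A i))).card : ℝ) :=
    (Real.log_le_log_iff (pow_pos hFpos k) (Finset.prod_pos (fun i _ => htpos i))).1 hlog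
  exact_mod_cast hfin
end Shearer3
section Graphs
open Finset

/-- edge type of the complete graph on `Fin n` -/
abbrev En (n : ℕ) := {p : Fin n × Fin n // p.1 < p.2}

def mkEdge {n : ℕ} (a b : Fin n) (h : a ≠ b) : En n :=
  if hab : a < b then ⟨(a,b), hab⟩ else ⟨(b,a), lt_of_le_of_ne (le_of_not_gt hab) h.symm⟩

lemma mkEdge_val {n : ℕ} (a b : Fin n) (h : a ≠ b) :
    (mkEdge a b h).val = (a, b) ∨ (mkEdge a b h).val = (b, a) := by
  unfold mkEdge
  split
  · exact Or.inl rfl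
  · exact Or.inr rfl

lemma mkEdge_comm {n : ℕ} (a b : Fin n) (h : a ≠ b) : mkEdge a b h = mkEdge b a h.symm := by
  unfold mkEdge
  rcases lt_trichotomy a b with h1 | h1 | h1
  · rw [dif_pos h1, dif_neg (asymm h1)]
  · exact absurd h1 h
  · rw [dif_neg (asymm h1), dif_pos h1]

lemma mkEdge_lt {n : ℕ} {a b : Fin n} (h : a < b) : mkEdge a b (ne_of_lt h) = ⟨(a,b), h⟩ := by
  unfold mkEdge
  rw [dif_pos h]

/-- the pairs with both coordinates in `T`, counted -/
lemma card_filter_en {n : ℕ} (T : Finset (Fin n)) :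
    ((univ : Finset (En n)).filter (fun e => e.val.1 ∈ T ∧ e.val.2 ∈ T)).card
      = T.card.choose 2 := by
  classical
  rw [← Finset.card_powersetCard 2 T]
  apply Finset.card_bij (fun (e : En n) _ => ({e.val.1, e.val.2} : Finset (Fin n)))
  · intro e he
    rw [mem_filter] at he
    rw [Finset.mem_powersetCard]
    constructor
    · intro x hx
      rw [Finset.mem_insert, Finset.mem_singleton] at hx
      rcases hx with rfl | rfl
      · exact he.2.1
      · exact he.2.2
    · exact Finset.card_pair (ne_of_lt e.prop)
  · intro e1 h1 e2 h2 heq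
    have hlt1 := e1.prop
    have hlt2 := e2.prop
    have m11 : e1.val.1 ∈ ({e2.val.1, e2.val.2} : Finset (Fin n)) := by
      rw [← heq]; simp
    have m12 : e1.val.2 ∈ ({e2.val.1, e2.val.2} : Finset (Fin n)) := by
      rw [← heq]; simp
    have m21 : e2.val.1 ∈ ({e1.val.1, e1.val.2} : Finset (Fin n)) := by
      rw [heq]; simp
    simp only [Finset.mem_insert, Finset.mem_singleton] at m11 m12 m21
    apply Subtype.ext
    rcases m11 with h11 | h11
    · rcases m12 with h12 | h12
      · exact absurd (h11 ▸ h12 ▸ hlt1) (lt_irrefl _)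
      · exact Prod.ext h11 h12
    · rcases m12 with h12 | h12
      · exact absurd (hlt2.trans (h12 ▸ h11 ▸ hlt1)) (lt_irrefl _)
      · exact absurd (h11 ▸ h12 ▸ hlt1) (lt_irrefl _)
  · intro s hs
    rw [Finset.mem_powersetCard] at hs
    obtain ⟨a, b, hab, rfl⟩ := Finset.card_eq_two.1 hs.2
    have ha : a ∈ T := hs.1 (by simp)
    have hb : b ∈ T := hs.1 (by simp)
    rcases lt_or_gt_of_ne hab with h | h
    · exact ⟨⟨(a,b), h⟩, mem_filter.2 ⟨mem_univ _, ha, hb⟩, rfl⟩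
    · exact ⟨⟨(b,a), h⟩, mem_filter.2 ⟨mem_univ _, hb, ha⟩, Finset.pair_comm b a⟩

/-- the edges avoiding vertex `i` -/
def Afin (n : ℕ) (i : Fin n) : Finset (En n) :=
  univ.filter (fun e => e.val.1 ≠ i ∧ e.val.2 ≠ i)

lemma mem_Afin {n : ℕ} {i : Fin n} {e : En n} :
    e ∈ Afin n i ↔ e.val.1 ≠ i ∧ e.val.2 ≠ i := by
  simp [Afin]

lemma cover_card {n : ℕ} (e : En n) :
    (univ.filter (fun i : Fin n => e ∈ Afin n i)).card = n - 2 := by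
  classical
  have : (univ.filter (fun i : Fin n => e ∈ Afin n i))
      = ({e.val.1, e.val.2} : Finset (Fin n))ᶜ := by
    ext a
    simp only [mem_filter, mem_univ, true_and, mem_Afin, Finset.mem_compl,
      Finset.mem_insert, Finset.mem_singleton]
    constructor
    · rintro ⟨h1, h2⟩ (rfl | rfl)
      · exact h1 rfl
      · exact h2 rfl
    · intro h
      exact ⟨fun hh => h (Or.inl hh.symm), fun hh => h (Or.inr hh.symm)⟩
  rw [this, Finset.card_compl, Finset.card_pair (ne_of_lt e.prop), Fintype.card_fin]

lemma twice_choose (m : ℕ) : 2 * m.choose 2 = m * (m - 1) := by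
  rw [Nat.choose_two_right]
  exact Nat.mul_div_cancel' (even_iff_two_dvd.mp (Nat.even_mul_pred_self m))

lemma key_identity {n : ℕ} (hn : 3 ≤ n) :
    n * ((n-2).choose 2) = (n-2) * (n.choose 2 - n) := by
  have h1 : 2 * ((n-2).choose 2) = (n-2) * (n-3) := by
    have hx : n - 2 - 1 = n - 3 := by omega
    rw [twice_choose, hx]
  have h2 : 2 * (n.choose 2) = n * (n-1) := twice_choose n
  have hge : n ≤ n.choose 2 := by
    have hx : n * 2 ≤ n * (n - 1) := Nat.mul_le_mul_left n (by omega)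
    omega
  have h2n : 2 ≤ n := by omega
  have h3n : 3 ≤ n := hn
  qify [hge, h2n, h3n, (show 1 ≤ n by omega)] at h1 h2 ⊢
  linear_combination ((n : ℚ)/2) * h1 - (((n : ℚ) - 2)/2) * h2
end Graphs
section L1
open Finset

/-- the "intersection graph" of two edge-functions, on vertices `≠ i` -/
def Gint {n : ℕ} (i : Fin n) (f f' : En n → Bool) :
    SimpleGraph ↥{v : Fin n | v ≠ i} where
  Adj x y := ∃ h : (x : Fin n) ≠ (y : Fin n),
    (f (mkEdge x y h) && f' (mkEdge x y h)) = true
  symm := by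
    constructor
    rintro x y ⟨h, hv⟩
    exact ⟨h.symm, by rwa [← mkEdge_comm]⟩
  loopless := by
    constructor
    rintro x ⟨h, _⟩
    exact h rfl

lemma gint_adj {n : ℕ} (i : Fin n) (f f' : En n → Bool) (x y : ↥{v : Fin n | v ≠ i}) :
    (Gint i f f').Adj x y ↔ ∃ h : (x : Fin n) ≠ (y : Fin n),
      (f (mkEdge x y h) && f' (mkEdge x y h)) = true := Iff.rfl

lemma bool_xor_aux : ∀ a b c d u v : Bool,
    ((a != (c != u)) = (b != (d != v))) → ((a != b) = ((c != d) != (u != v))) := by decide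

lemma bool_false_bne : ∀ x : Bool, (false != x) = x := by decide
lemma bool_bne_false : ∀ x : Bool, (x != false) = x := by decide

/-- coset bound: a family of edge-functions supported away from `i`, any two distinct
members of which have connected intersection graph off `i`, has size ≤ `2 ^ C(n-2,2)`. -/
lemma coset_bound {n : ℕ} (hn : 3 ≤ n) (i : Fin n) (P : Finset (En n → Bool))
    (hvan : ∀ f ∈ P, ∀ e : En n, (e.val.1 = i ∨ e.val.2 = i) → f e = false)
    (hconn : ∀ f ∈ P, ∀ f' ∈ P, f ≠ f' → (Gint i f f').Connected) :
    P.card ≤ 2 ^ ((n-2).choose 2) := by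
  classical
  set v₀ : Fin n := ⟨if i.val = 0 then 1 else 0, by split <;> omega⟩ with hv₀def
  have hv₀i : v₀ ≠ i := by
    intro hEq
    have h1 : v₀.val = i.val := congrArg Fin.val hEq
    simp only [hv₀def] at h1
    split_ifs at h1 <;> omega
  set tb : (En n → Bool) → Fin n → Bool :=
    fun f a => if h : a = v₀ then false else f (mkEdge a v₀ h) with htb
  have htbv₀ : ∀ f, tb f v₀ = false := by
    intro f; rw [htb]; simp
  have htbi : ∀ f ∈ P, tb f i = false := by
    intro f hf
    rw [htb]
    show (if h : i = v₀ then false else f (mkEdge i v₀ h)) = false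
    rw [dif_neg hv₀i.symm]
    apply hvan f hf
    rcases mkEdge_val i v₀ hv₀i.symm with h | h <;> rw [h]
    · exact Or.inl rfl
    · exact Or.inr rfl
  set Bs : Finset (En n) := univ.filter
    (fun e => (e.val.1 ≠ i ∧ e.val.2 ≠ i) ∧ e.val.1 ≠ v₀ ∧ e.val.2 ≠ v₀) with hBs
  have hBscard : Bs.card = (n-2).choose 2 := by
    have heq : Bs = univ.filter
        (fun e : En n => e.val.1 ∈ (univ.erase i).erase v₀ ∧ e.val.2 ∈ (univ.erase i).erase v₀) := by
      ext e
      simp only [hBs, mem_filter, mem_univ, true_and, Finset.mem_erase]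
      tauto
    rw [heq, card_filter_en]
    congr 1
    rw [Finset.card_erase_of_mem (Finset.mem_erase.2 ⟨hv₀i, mem_univ _⟩),
      Finset.card_erase_of_mem (mem_univ _), Finset.card_univ, Fintype.card_fin]
    omega
  set tog : (En n → Bool) → (En n → Bool) :=
    fun f => ppi Bs (fun e => (f e) != ((tb f e.val.1) != (tb f e.val.2))) with htog
  have key : P.card ≤ Fintype.card (↥Bs → Bool) := by
    rw [← Finset.card_univ]
    apply Finset.card_le_card_of_injOn
      (fun f => (fun e : ↥Bs => tog f e.val)) (fun _ _ => mem_univ _)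
    intro f hfm f' hfm' hΨ
    simp only [Finset.mem_coe] at hfm hfm'
    by_contra hne
    have htogeq : ∀ e : En n, e ∈ Bs → tog f e = tog f' e := by
      intro e he
      exact congrFun hΨ ⟨e, he⟩
    set sb : Fin n → Bool := fun a => (tb f a) != (tb f' a) with hsb
    have hsbv₀ : sb v₀ = false := by rw [hsb]; simp [htbv₀]
    have hsbi : sb i = false := by rw [hsb]; simp [htbi f hfm, htbi f' hfm']
    have cross : ∀ e : En n, e.val.1 ≠ i → e.val.2 ≠ i →
        ((f e) != (f' e)) = ((sb e.val.1) != (sb e.val.2)) := by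
      intro e he1 he2
      by_cases hv1 : e.val.1 = v₀
      · have hlt : (v₀ : Fin n) < e.val.2 := by rw [← hv1]; exact e.prop
        have ha : e.val.2 ≠ v₀ := ne_of_gt hlt
        have hme : mkEdge e.val.2 v₀ ha = e := by
          apply Subtype.ext
          unfold mkEdge
          rw [dif_neg (asymm hlt)]
          exact Prod.ext hv1.symm rfl
        have htbf : ∀ g : En n → Bool, tb g e.val.2 = g e := by
          intro g; rw [htb]; simp only; rw [dif_neg ha, hme]
        rw [hv1, hsbv₀, hsb]
        simp only [htbf]
        rw [bool_false_bne]
      by_cases hv2 : e.val.2 = v₀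
      · have hlt : e.val.1 < v₀ := by rw [← hv2]; exact e.prop
        have ha : e.val.1 ≠ v₀ := ne_of_lt hlt
        have hme : mkEdge e.val.1 v₀ ha = e := by
          apply Subtype.ext
          unfold mkEdge
          rw [dif_pos hlt]
          exact Prod.ext rfl hv2.symm
        have htbf : ∀ g : En n → Bool, tb g e.val.1 = g e := by
          intro g; rw [htb]; simp only; rw [dif_neg ha, hme]
        rw [hv2, hsbv₀, hsb]
        simp only [htbf]
        rw [bool_bne_false]
      · have he : e ∈ Bs := by
          rw [hBs, mem_filter]
          exact ⟨mem_univ _, ⟨he1, he2⟩, hv1, hv2⟩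
        have := htogeq e he
        rw [htog] at this
        simp only [ppi_mem he] at this
        exact bool_xor_aux _ _ _ _ _ _ this
    -- find a vertex in the symmetric difference
    have hex : ∃ e : En n, f e ≠ f' e := by
      by_contra hno
      push_neg at hno
      exact hne (funext hno)
    obtain ⟨e₀, he₀⟩ := hex
    have he₀1 : e₀.val.1 ≠ i := by
      intro h
      exact he₀ ((hvan f hfm e₀ (Or.inl h)).trans (hvan f' hfm' e₀ (Or.inl h)).symm)
    have he₀2 : e₀.val.2 ≠ i := by
      intro h
      exact he₀ ((hvan f hfm e₀ (Or.inr h)).trans (hvan f' hfm' e₀ (Or.inr h)).symm)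
    have hcr := cross e₀ he₀1 he₀2
    have hbne : (f e₀ != f' e₀) = true := by
      cases h1 : f e₀ <;> cases h2 : f' e₀ <;> simp_all
    rw [hbne] at hcr
    have hsor : sb e₀.val.1 = true ∨ sb e₀.val.2 = true := by
      revert hcr; cases sb e₀.val.1 <;> cases sb e₀.val.2 <;> decide
    obtain ⟨s, hs, hsi, hsv₀⟩ : ∃ s : Fin n, sb s = true ∧ s ≠ i ∧ s ≠ v₀ := by
      rcases hsor with h | h
      · exact ⟨e₀.val.1, h, he₀1, fun hh => by rw [hh, hsbv₀] at h; exact Bool.false_ne_true h⟩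
      · exact ⟨e₀.val.2, h, he₀2, fun hh => by rw [hh, hsbv₀] at h; exact Bool.false_ne_true h⟩
    -- walk from s to v₀ in the intersection graph: boundary dart gives a contradiction
    have hc := hconn f hfm f' hfm' hne
    obtain ⟨w⟩ := hc.preconnected ⟨s, hsi⟩ ⟨v₀, hv₀i⟩
    obtain ⟨d, _, hdS, hdnS⟩ := w.exists_boundary_dart
      {x : ↥{v : Fin n | v ≠ i} | sb x.val = true} hs (by simp [hsbv₀])
    obtain ⟨hadj_ne, hadj_val⟩ := d.adj
    set x : ↥{v : Fin n | v ≠ i} := d.toProd.1 with hx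
    set y : ↥{v : Fin n | v ≠ i} := d.toProd.2 with hy
    have hxs : sb x.val = true := hdS
    have hys : sb y.val = false := by
      simp only [Set.mem_setOf_eq] at hdnS
      exact Bool.not_eq_true _ ▸ (by simpa using hdnS)
    set em : En n := mkEdge x.val y.val hadj_ne with hem
    have hfem : f em = true ∧ f' em = true := by
      rw [Bool.and_eq_true] at hadj_val
      exact hadj_val
    have hem1 : em.val.1 ≠ i ∧ em.val.2 ≠ i := by
      rcases mkEdge_val x.val y.val hadj_ne with h | h <;> rw [hem, h]
      · exact ⟨x.2, y.2⟩
      · exact ⟨y.2, x.2⟩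
    have hcross := cross em hem1.1 hem1.2
    rw [hfem.1, hfem.2] at hcross
    have : (sb em.val.1 != sb em.val.2) = true := by
      rcases mkEdge_val x.val y.val hadj_ne with h | h <;> rw [hem, h] <;>
        simp [hxs, hys]
    rw [this] at hcross
    exact absurd hcross (by decide)
  calc P.card ≤ Fintype.card (↥Bs → Bool) := key
    _ = 2 ^ ((n-2).choose 2) := by
        rw [Fintype.card_fun, Fintype.card_coe, hBscard, Fintype.card_bool]
end L1
section Main
open Finset

open Classical in
noncomputable def gtoF {n : ℕ} (G : SimpleGraph (Fin n)) : En n → Bool :=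
  fun e => if G.Adj e.val.1 e.val.2 then true else false

lemma gtoF_true_iff {n : ℕ} (G : SimpleGraph (Fin n)) (e : En n) :
    gtoF G e = true ↔ G.Adj e.val.1 e.val.2 := by
  unfold gtoF
  split <;> simp_all

lemma gtoF_inj {n : ℕ} : Function.Injective (gtoF (n := n)) := by
  intro G H hGH
  have key : ∀ a b : Fin n, a < b → (G.Adj a b ↔ H.Adj a b) := by
    intro a b hab
    rw [← gtoF_true_iff G ⟨(a,b), hab⟩, ← gtoF_true_iff H ⟨(a,b), hab⟩, hGH]
  ext a b
  rcases lt_trichotomy a b with hab | hab | hab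
  · exact key a b hab
  · subst hab; simp
  · rw [G.adj_comm, H.adj_comm]; exact key b a hab

lemma gint_eq {n : ℕ} (i : Fin n) (G H : SimpleGraph (Fin n)) :
    Gint i (ppi (Afin n i) (gtoF G)) (ppi (Afin n i) (gtoF H))
      = (G ⊓ H).induce {v : Fin n | v ≠ i} := by
  ext x y
  have hmem : ∀ (hxy : (x : Fin n) ≠ (y : Fin n)), mkEdge x.val y.val hxy ∈ Afin n i := by
    intro hxy
    rw [mem_Afin]
    rcases mkEdge_val x.val y.val hxy with hv | hv <;> rw [hv]
    · exact ⟨x.2, y.2⟩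
    · exact ⟨y.2, x.2⟩
  constructor
  · rintro ⟨hxy, hb⟩
    rw [Bool.and_eq_true, ppi_mem (hmem hxy) (gtoF G), ppi_mem (hmem hxy) (gtoF H),
      gtoF_true_iff, gtoF_true_iff] at hb
    have hadj : G.Adj x.val y.val ∧ H.Adj x.val y.val := by
      rcases mkEdge_val x.val y.val hxy with hv | hv <;> rw [hv] at hb
      · exact hb
      · exact ⟨hb.1.symm, hb.2.symm⟩
    show (G ⊓ H).Adj x.val y.val
    exact hadj
  · intro hadj
    have hGH : (G ⊓ H).Adj x.val y.val := hadj
    have hxy : (x : Fin n) ≠ (y : Fin n) := hGH.ne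
    refine ⟨hxy, ?_⟩
    rw [Bool.and_eq_true, ppi_mem (hmem hxy) (gtoF G), ppi_mem (hmem hxy) (gtoF H),
      gtoF_true_iff, gtoF_true_iff]
    rcases mkEdge_val x.val y.val hxy with hv | hv <;> rw [hv]
    · exact ⟨hGH.1, hGH.2⟩
    · exact ⟨hGH.1.symm, hGH.2.symm⟩

/-- If the intersection of any two members of `F` is connected and has no cutvertex
(deleting any vertex leaves a connected graph), then `|F| ≤ 2 ^ (C(n,2) - n)`. -/
theorem stmt_16 (n : ℕ) (hn : 3 ≤ n) (F : Set (SimpleGraph (Fin n)))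
    (h : ∀ G ∈ F, ∀ H ∈ F, (G ⊓ H).Connected ∧
      ∀ i : Fin n, ((G ⊓ H).induce {v : Fin n | v ≠ i}).Connected) :
    F.ncard ≤ 2 ^ (n.choose 2 - n) := by
  classical
  have hFfin : F.Finite :=
    Set.Finite.of_finite_image (Set.toFinite (gtoF '' F)) (gtoF_inj.injOn)
  set FB : Finset (En n → Bool) := hFfin.toFinset.image gtoF with hFB
  have hcard : F.ncard = FB.card := by
    rw [hFB, Finset.card_image_of_injective _ gtoF_inj]
    exact Set.ncard_eq_toFinset_card _ hFfin
  have hshear := shearer_ineq (Afin n) (n-2) (by omega)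
    (fun e => le_of_eq (cover_card e).symm) FB
  have hper : ∀ i : Fin n, (FB.image (ppi (Afin n i))).card ≤ 2 ^ ((n-2).choose 2) := by
    intro i
    apply coset_bound hn i
    · intro f hf e he
      obtain ⟨g, hg, rfl⟩ := Finset.mem_image.1 hf
      have : e ∉ Afin n i := by
        rw [mem_Afin]
        tauto
      exact ppi_not_mem this _
    · intro f hf f' hf' hne
      obtain ⟨g, hg, rfl⟩ := Finset.mem_image.1 hf
      obtain ⟨g', hg', rfl⟩ := Finset.mem_image.1 hf'
      obtain ⟨G, hGF, rfl⟩ := Finset.mem_image.1 hg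
      obtain ⟨H, hHF, rfl⟩ := Finset.mem_image.1 hg'
      rw [gint_eq i G H]
      exact (h G (hFfin.mem_toFinset.1 hGF) H (hFfin.mem_toFinset.1 hHF)).2 i
  have hfinal : FB.card ^ (n-2) ≤ (2 ^ (n.choose 2 - n)) ^ (n-2) := by
    calc FB.card ^ (n-2) ≤ ∏ i, (FB.image (ppi (Afin n i))).card := hshear
      _ ≤ ∏ _i : Fin n, 2 ^ ((n-2).choose 2) := Finset.prod_le_prod' (fun i _ => hper i)
      _ = (2 ^ ((n-2).choose 2)) ^ n := by
          rw [Finset.prod_const, Finset.card_univ, Fintype.card_fin]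
      _ = 2 ^ (((n-2).choose 2) * n) := (pow_mul 2 _ n).symm
      _ = 2 ^ ((n.choose 2 - n) * (n-2)) := by
          rw [show ((n-2).choose 2) * n = (n.choose 2 - n) * (n-2) by
            rw [mul_comm, key_identity hn, mul_comm]]
      _ = (2 ^ (n.choose 2 - n)) ^ (n-2) := pow_mul 2 _ _
  rw [hcard]
  exact (Nat.pow_le_pow_iff_left (show n-2 ≠ 0 by omega)).1 hfinal
end Main
end
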